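/- arXiv:2410.13652 — 7 statements merged into one kernel-verified Lean document; each statement's English description precedes it below -/
import Mathlib

section
/- For n ≥ 3, the number of axially symmetric dihedral orderings of the 2n-element set N = {±1,...,±n} is 2^{n-2} · n!. -/
open Equiv

namespace AxialAux

variable {n : ℕ}

abbrev NN (n : ℕ) := {i : ℤ // i ≠ 0 ∧ i.natAbs ≤ n}

abbrev axialP (n : ℕ) (σ : ZMod (2 * n) ≃ NN n) : Prop :=
  ∀ p : ZMod (2 * n), ((σ p : ℤ)) = -((σ (-1 - p) : ℤ))

abbrev Dgrp (n : ℕ) : Subgroup (Equiv.Perm (ZMod (2 * n))) :=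
  Subgroup.closure {Equiv.addLeft (1 : ZMod (2 * n)), Equiv.neg (ZMod (2 * n))}

/-! ### Part 1 : counting axial orderings -/

def e2 (n : ℕ) : NN n ≃ Bool × Fin n where
  toFun i := (decide (0 < i.1), ⟨i.1.natAbs - 1, by have := i.2.1; have := i.2.2; omega⟩)
  invFun x := ⟨if x.1 then (x.2 : ℤ) + 1 else -((x.2 : ℤ) + 1), by
    rcases x with ⟨b, j⟩
    have := j.2
    cases b <;> simp <;> omega⟩
  left_inv i := by
    rcases i with ⟨i, h1, h2⟩
    ext
    by_cases h : 0 < i <;> simp [h] <;> omega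
  right_inv x := by
    rcases x with ⟨b, j⟩
    have := j.2
    cases b <;> refine Prod.ext ?_ (Fin.ext ?_) <;> simp <;> omega

def bnot : Bool ≃ Bool := ⟨not, not, Bool.not_not, Bool.not_not⟩

def JJ (n : ℕ) : Bool × Fin n ≃ Bool × Fin n := bnot.prodCongr (Equiv.refl (Fin n))

@[simp] lemma JJ_apply (x : Bool × Fin n) : JJ n x = (!x.1, x.2) := rfl

lemma e2_neg (n : ℕ) (x : NN n) (y : NN n) (h : (x : ℤ) = -(y : ℤ)) :
    e2 n x = JJ n (e2 n y) := by
  rcases x with ⟨a, ha⟩; rcases y with ⟨b, hb⟩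
  simp only at h; subst h
  simp only [JJ_apply]
  refine Prod.ext ?_ (Fin.ext ?_)
  · rcases hb.1.lt_or_gt with h | h <;>
      simp [e2, h, not_lt.mpr h.le, asymm h]
  · simp [e2]

lemma e2_neg_iff (n : ℕ) (x y : NN n) :
    (x : ℤ) = -(y : ℤ) ↔ e2 n x = JJ n (e2 n y) := by
  refine ⟨e2_neg n x y, fun h => ?_⟩
  have hy : (-(y : ℤ)) ≠ 0 ∧ (-(y : ℤ)).natAbs ≤ n := by
    have := y.2.1; have := y.2.2; constructor <;> simp_all
  have h2 : e2 n (⟨-(y : ℤ), hy⟩ : NN n) = JJ n (e2 n y) := e2_neg n _ y rfl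
  have := (e2 n).injective (h.trans h2.symm)
  rw [this]

def e1 (n : ℕ) (hn : 0 < n) : ZMod (2 * n) ≃ Bool × Fin n :=
  haveI : NeZero (2 * n) := ⟨by omega⟩
  { toFun := fun p => if h : p.val < n then (true, ⟨p.val, h⟩) else
      (false, ⟨2 * n - 1 - p.val, by have := ZMod.val_lt p; omega⟩)
    invFun := fun x => if x.1 then ((x.2 : ℕ) : ZMod (2 * n)) else (((2 * n - 1 - (x.2 : ℕ) : ℕ)) : ZMod (2 * n))
    left_inv := fun p => by
      have hv := ZMod.val_lt p
      by_cases h : p.val < n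
      · simp only [h, dif_pos, if_pos]
        exact ZMod.natCast_zmod_val p
      · simp only [h, dif_neg, if_neg, Bool.false_eq_true, not_false_iff]
        have : 2 * n - 1 - (2 * n - 1 - p.val) = p.val := by omega
        rw [this]
        exact ZMod.natCast_zmod_val p
    right_inv := fun x => by
      rcases x with ⟨b, j⟩
      have hj := j.2
      cases b
      · have hlt : 2 * n - 1 - (j : ℕ) < 2 * n := by omega
        have hval : (((2 * n - 1 - (j : ℕ) : ℕ)) : ZMod (2 * n)).val = 2 * n - 1 - (j : ℕ) :=
          ZMod.val_cast_of_lt hlt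
        simp only [if_neg, Bool.false_eq_true, not_false_iff]
        rw [dif_neg (by omega)]
        refine Prod.ext rfl (Fin.ext ?_)
        simp [hval]; omega
      · have hval : (((j : ℕ)) : ZMod (2 * n)).val = (j : ℕ) :=
          ZMod.val_cast_of_lt (by omega)
        simp only [if_pos]
        rw [dif_pos (by omega : ((((j : ℕ)) : ZMod (2 * n)).val < n))]
        refine Prod.ext rfl (Fin.ext ?_)
        simp [hval] }

lemma e1_pair (hn : 0 < n) (p : ZMod (2 * n)) :
    e1 n hn (-1 - p) = JJ n (e1 n hn p) := by
  haveI : NeZero (2 * n) := ⟨by omega⟩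
  have hv := ZMod.val_lt p
  have key : (-1 - p) = (((2 * n - 1 - p.val : ℕ)) : ZMod (2 * n)) := by
    have h1 : ((2 * n : ℕ) : ZMod (2 * n)) = 0 := ZMod.natCast_self _
    have : (2 * n - 1 - p.val : ℕ) = 2 * n - (1 + p.val) := by omega
    rw [this, Nat.cast_sub (by omega), h1, Nat.cast_add, Nat.cast_one, ZMod.natCast_zmod_val p]
    ring
  have hval : (-1 - p).val = 2 * n - 1 - p.val := by
    rw [key]; exact ZMod.val_cast_of_lt (by omega)
  simp only [JJ_apply]
  by_cases h : p.val < n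
  · rw [show e1 n hn p = (true, ⟨p.val, h⟩) from dif_pos h]
    simp only [e1, Equiv.coe_fn_mk]
    rw [dif_neg (by omega)]
    refine Prod.ext rfl (Fin.ext ?_)
    simp [hval]; omega
  · rw [show e1 n hn p = (false, ⟨2 * n - 1 - p.val, by omega⟩) from dif_neg h]
    simp only [e1, Equiv.coe_fn_mk]
    rw [dif_pos (by rw [hval]; omega)]
    refine Prod.ext rfl (Fin.ext ?_)
    simp [hval]

abbrev CT (n : ℕ) := {τ : Bool × Fin n ≃ Bool × Fin n // ∀ x, τ (JJ n x) = JJ n (τ x)}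

noncomputable def ctEquiv (n : ℕ) : CT n ≃ (Fin n → Bool) × (Fin n ≃ Fin n) where
  toFun τ :=
    ⟨fun i => (τ.1 (true, i)).1,
     Equiv.ofBijective (fun i => (τ.1 (true, i)).2) (by
      rw [← Finite.injective_iff_bijective]
      intro i j hij
      by_cases h : (τ.1 (true, i)).1 = (τ.1 (true, j)).1
      · have : τ.1 (true, i) = τ.1 (true, j) := Prod.ext h hij
        simpa using τ.1.injective this
      · have h2 : τ.1 (false, i) = τ.1 (true, j) := by
          have := τ.2 (true, i)
          simp only [JJ_apply, Bool.not_true] at this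
          rw [this]
          refine Prod.ext ?_ hij
          simp only
          cases hb : (τ.1 (true, i)).1 <;> cases hb2 : (τ.1 (true, j)).1 <;>
            simp_all
        exact absurd (τ.1.injective h2) (by simp))⟩
  invFun x :=
    ⟨(Equiv.prodComm _ _).trans ((Equiv.prodShear x.2 (fun i => if x.1 i then Equiv.refl Bool else bnot)).trans (Equiv.prodComm _ _)), by
      rintro ⟨b, i⟩
      by_cases h : x.1 i <;> cases b <;>
        simp [Equiv.prodShear, h, bnot]⟩
  left_inv τ := by
    refine Subtype.ext (Equiv.ext ?_)
    rintro ⟨b, i⟩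
    have hτ := τ.2 (true, i)
    simp only [JJ_apply, Bool.not_true] at hτ
    by_cases h : (τ.1 (true, i)).1 <;> cases b <;>
      simp [Equiv.prodShear, h, bnot, Equiv.ofBijective, hτ] <;>
      exact Prod.ext (by simp [h]) rfl
  right_inv x := by
    rcases x with ⟨s, π⟩
    refine Prod.ext (funext fun i => ?_) (Equiv.ext fun i => ?_) <;>
      by_cases h : s i <;>
      simp [Equiv.prodShear, h, bnot, Equiv.ofBijective]

noncomputable def axialEquivCT (hn : 0 < n) :
    {σ : ZMod (2 * n) ≃ NN n // axialP n σ} ≃ CT n := by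
  refine ((Equiv.equivCongr (e1 n hn) (e2 n)).subtypeEquiv ?_)
  intro σ
  constructor
  · intro hax x
    set p := (e1 n hn).symm x with hp
    have hx : x = e1 n hn p := by rw [hp, Equiv.apply_symm_apply]
    rw [hx, ← e1_pair hn p]
    simp only [Equiv.equivCongr_apply_apply, Equiv.symm_apply_apply]
    exact (e2_neg_iff n (σ (-1 - p)) (σ p)).mp (by rw [hax p]; ring)
  · intro hcomm p
    have := hcomm (e1 n hn p)
    rw [← e1_pair hn p] at this
    simp only [Equiv.equivCongr_apply_apply, Equiv.symm_apply_apply] at this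
    have h2 := (e2_neg_iff n (σ (-1 - p)) (σ p)).mpr this
    rw [h2]; ring

lemma card_axial (hn : 0 < n) :
    Nat.card {σ : ZMod (2 * n) ≃ NN n // axialP n σ} = 2 ^ n * n.factorial := by
  classical
  rw [Nat.card_congr ((axialEquivCT hn).trans (ctEquiv n))]
  rw [Nat.card_eq_fintype_card, Fintype.card_prod, Fintype.card_fun]
  simp [Fintype.card_perm]

/-! ### Part 2 : dihedral group structure -/

def reflC (c : ZMod (2 * n)) : Equiv.Perm (ZMod (2 * n)) :=
  (Equiv.neg (ZMod (2 * n))).trans (Equiv.addLeft c)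

@[simp] lemma reflC_apply (c p : ZMod (2 * n)) : reflC c p = c - p := by
  simp [reflC, sub_eq_add_neg]

lemma addLeft_mem (a : ZMod (2 * n)) (hn : 0 < n) : Equiv.addLeft a ∈ Dgrp n := by
  haveI : NeZero (2 * n) := ⟨by omega⟩
  have key : ∀ k : ℕ, Equiv.addLeft ((k : ZMod (2 * n))) ∈ Dgrp n := by
    intro k
    induction k with
    | zero => simp only [Nat.cast_zero]
              have : Equiv.addLeft (0 : ZMod (2 * n)) = 1 := by ext p; simp
              rw [this]; exact one_mem _
    | succ k ih =>
        have : Equiv.addLeft ((k + 1 : ℕ) : ZMod (2 * n)) =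
            Equiv.addLeft (1 : ZMod (2 * n)) * Equiv.addLeft ((k : ℕ) : ZMod (2 * n)) := by
          ext p; push_cast; simp [Equiv.Perm.mul_apply]; ring
        rw [this]
        exact mul_mem (Subgroup.subset_closure (Set.mem_insert _ _)) ih
  rw [← ZMod.natCast_zmod_val a]
  exact key a.val

lemma neg_mem' : Equiv.neg (ZMod (2 * n)) ∈ Dgrp n :=
  Subgroup.subset_closure (Set.mem_insert_of_mem _ rfl)

lemma reflC_mem (c : ZMod (2 * n)) (hn : 0 < n) : reflC c ∈ Dgrp n := by
  have : reflC c = Equiv.addLeft c * Equiv.neg (ZMod (2 * n)) := by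
    ext p; simp [Equiv.Perm.mul_apply, reflC, sub_eq_add_neg]
  rw [this]
  exact mul_mem (addLeft_mem c hn) neg_mem'

lemma dih_structure {d : Equiv.Perm (ZMod (2 * n))} (hd : d ∈ Dgrp n) :
    (∃ a, d = Equiv.addLeft a) ∨ (∃ c, d = reflC c) := by
  induction hd using Subgroup.closure_induction with
  | mem x hx =>
      rcases hx with hx | hx
      · exact Or.inl ⟨1, hx.symm ▸ rfl⟩
      · refine Or.inr ⟨0, ?_⟩
        rw [hx]; ext p; simp
  | one => exact Or.inl ⟨0, by ext p; simp⟩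
  | mul x y _ _ ihx ihy =>
      rcases ihx with ⟨a, rfl⟩ | ⟨c, rfl⟩ <;> rcases ihy with ⟨b, rfl⟩ | ⟨e, rfl⟩
      · exact Or.inl ⟨a + b, by ext p; simp [Equiv.Perm.mul_apply]; try ring⟩
      · exact Or.inr ⟨a + e, by ext p; simp [Equiv.Perm.mul_apply]; try ring⟩
      · exact Or.inr ⟨c - b, by ext p; simp [Equiv.Perm.mul_apply]; try ring⟩
      · exact Or.inl ⟨c - e, by ext p; simp [Equiv.Perm.mul_apply]; try ring⟩
  | inv x _ ihx =>
      rcases ihx with ⟨a, rfl⟩ | ⟨c, rfl⟩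
      · refine Or.inl ⟨-a, ?_⟩
        rw [eq_comm, eq_inv_iff_mul_eq_one]
        ext p; simp [Equiv.Perm.mul_apply]
      · refine Or.inr ⟨c, ?_⟩
        rw [eq_comm, eq_inv_iff_mul_eq_one]
        ext p; simp [Equiv.Perm.mul_apply]

lemma two_mul_eq_zero (hn : 0 < n) {a : ZMod (2 * n)} (h : a + a = 0) :
    a = 0 ∨ a = (n : ZMod (2 * n)) := by
  haveI : NeZero (2 * n) := ⟨by omega⟩
  have hv := ZMod.val_lt a
  have h2 : ((a.val + a.val : ℕ) : ZMod (2 * n)) = 0 := by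
    push_cast [ZMod.natCast_zmod_val a]; exact h
  rw [ZMod.natCast_eq_zero_iff] at h2
  have : a.val = 0 ∨ a.val = n := by
    rcases h2 with ⟨k, hk⟩
    rcases Nat.lt_or_ge k 2 with hk2 | hk2
    · interval_cases k <;> omega
    · have : 2 * n * 2 ≤ 2 * n * k := Nat.mul_le_mul_left _ hk2
      omega
  rcases this with h0 | h0
  · left; rw [← ZMod.natCast_zmod_val a, h0]; simp
  · right; rw [← ZMod.natCast_zmod_val a, h0]

lemma two_n_zero (hn : 0 < n) : ((n : ZMod (2 * n))) + (n : ZMod (2 * n)) = 0 := by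
  have : (((2 * n : ℕ)) : ZMod (2 * n)) = 0 := ZMod.natCast_self _
  push_cast at this
  linear_combination this

section
variable (hn : 0 < n) {σ : ZMod (2 * n) ≃ NN n} (hσ : axialP n σ)
include hn hσ

lemma axial_shift : axialP n ((Equiv.addLeft ((n : ZMod (2 * n)))).trans σ) := by
  intro p
  simp only [Equiv.trans_apply, Equiv.coe_addLeft]
  have h1 : (n : ZMod (2 * n)) + (-1 - p) = -1 - ((n : ZMod (2 * n)) + p) := by
    linear_combination two_n_zero hn
  rw [h1]
  exact hσ ((n : ZMod (2 * n)) + p)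

omit hn in
lemma axial_reflA : axialP n ((reflC (-1)).trans σ) := by
  intro p
  simp only [Equiv.trans_apply, reflC_apply]
  have h1 : (-1 : ZMod (2 * n)) - (-1 - p) = p := by ring
  rw [h1]
  have := hσ p
  omega

lemma axial_reflB : axialP n ((reflC ((n : ZMod (2 * n)) - 1)).trans σ) := by
  intro p
  simp only [Equiv.trans_apply, reflC_apply]
  have h1 : (n : ZMod (2 * n)) - 1 - (-1 - p) = (n : ZMod (2 * n)) + p := by ring
  have h2 : (n : ZMod (2 * n)) - 1 - p = -1 - ((n : ZMod (2 * n)) + p) := by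
    linear_combination two_n_zero hn
  rw [h1, h2]
  have := hσ ((n : ZMod (2 * n)) + p)
  omega
end

lemma rigidity (hn : 0 < n) {σ τ : ZMod (2 * n) ≃ NN n} (hσ : axialP n σ) (hτ : axialP n τ)
    {d : Equiv.Perm (ZMod (2 * n))} (hd : d ∈ Dgrp n)
    (heq : τ = d.trans σ) :
    d = 1 ∨ d = Equiv.addLeft ((n : ZMod (2 * n))) ∨ d = reflC (-1) ∨
      d = reflC ((n : ZMod (2 * n)) - 1) := by
  rcases dih_structure hd with ⟨a, rfl⟩ | ⟨c, rfl⟩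
  · have h0 := hτ 0
    rw [heq] at h0
    simp only [Equiv.trans_apply, Equiv.coe_addLeft] at h0
    have e1 : a + (0 : ZMod (2 * n)) = a := add_zero a
    have e2 : a + (-1 - 0) = a - 1 := by ring
    rw [e1, e2] at h0
    have hs := hσ a
    have hval : (σ (a - 1) : ℤ) = (σ (-1 - a) : ℤ) := by omega
    have harg : a - 1 = -1 - a := σ.injective (Subtype.ext hval)
    have ha : a + a = 0 := by linear_combination harg
    rcases two_mul_eq_zero hn ha with h | h
    · left; subst h; ext p; simp
    · right; left; subst h; rfl
  · have h0 := hτ 0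
    rw [heq] at h0
    simp only [Equiv.trans_apply, reflC_apply] at h0
    have e1 : c - (0 : ZMod (2 * n)) = c := sub_zero c
    have e2 : c - (-1 - 0) = c + 1 := by ring
    rw [e1, e2] at h0
    have hs := hσ c
    have hval : (σ (c + 1) : ℤ) = (σ (-1 - c) : ℤ) := by omega
    have harg : c + 1 = -1 - c := σ.injective (Subtype.ext hval)
    have hc : (c + 1) + (c + 1) = 0 := by linear_combination harg
    rcases two_mul_eq_zero hn hc with h | h
    · right; right; left
      have : c = -1 := by linear_combination h
      rw [this]
    · right; right; right
      have : c = (n : ZMod (2 * n)) - 1 := by linear_combination h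
      rw [this]

end AxialAux

namespace AxialAux

variable {n : ℕ}

lemma trans_mul {α β : Type*} (d e : Equiv.Perm α) (σ : α ≃ β) :
    e.trans (d.trans σ) = (d * e).trans σ := by
  ext p; simp [Equiv.Perm.mul_apply]

lemma one_trans {α β : Type*} (σ : α ≃ β) : (1 : Equiv.Perm α).trans σ = σ := by
  ext p; simp

lemma eval0_ne (hn : 3 ≤ n) {a b : ℕ} (ha : a < 2 * n) (hb : b < 2 * n) (hab : a ≠ b)
    {d e : Equiv.Perm (ZMod (2 * n))} (hda : d 0 = ((a : ℕ) : ZMod (2 * n)))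
    (heb : e 0 = ((b : ℕ) : ZMod (2 * n))) : d ≠ e := by
  haveI : NeZero (2 * n) := ⟨by omega⟩
  intro h
  rw [h, heb] at hda
  have := congrArg ZMod.val hda
  rw [ZMod.val_cast_of_lt hb, ZMod.val_cast_of_lt ha] at this
  exact hab this.symm

section distinct
variable (hn : 3 ≤ n)
include hn

lemma val_one : (1 : Equiv.Perm (ZMod (2 * n))) 0 = ((0 : ℕ) : ZMod (2 * n)) := by simp

lemma val_k2 : (Equiv.addLeft ((n : ZMod (2 * n)))) 0 = ((n : ℕ) : ZMod (2 * n)) := by simp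

lemma val_k3 : (reflC (-1 : ZMod (2 * n))) 0 = ((2 * n - 1 : ℕ) : ZMod (2 * n)) := by
  rw [reflC_apply]
  have h1 : ((2 * n : ℕ) : ZMod (2 * n)) = 0 := ZMod.natCast_self _
  rw [Nat.cast_sub (by omega), h1]
  push_cast
  ring

lemma val_k4 : (reflC ((n : ZMod (2 * n)) - 1)) 0 = ((n - 1 : ℕ) : ZMod (2 * n)) := by
  rw [reflC_apply, Nat.cast_sub (by omega)]
  push_cast
  ring

lemma ne12 : (1 : Equiv.Perm (ZMod (2 * n))) ≠ Equiv.addLeft ((n : ZMod (2 * n))) :=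
  eval0_ne hn (by omega) (by omega) (by omega) (val_one hn) (val_k2 hn)
lemma ne13 : (1 : Equiv.Perm (ZMod (2 * n))) ≠ reflC (-1) :=
  eval0_ne hn (by omega) (by omega) (by omega) (val_one hn) (val_k3 hn)
lemma ne14 : (1 : Equiv.Perm (ZMod (2 * n))) ≠ reflC ((n : ZMod (2 * n)) - 1) :=
  eval0_ne hn (by omega) (by omega) (by omega) (val_one hn) (val_k4 hn)
lemma ne23 : Equiv.addLeft ((n : ZMod (2 * n))) ≠ reflC (-1) :=
  eval0_ne hn (by omega) (by omega) (by omega) (val_k2 hn) (val_k3 hn)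
lemma ne24 : Equiv.addLeft ((n : ZMod (2 * n))) ≠ reflC ((n : ZMod (2 * n)) - 1) :=
  eval0_ne hn (by omega) (by omega) (by omega) (val_k2 hn) (val_k4 hn)
lemma ne34 : reflC (-1 : ZMod (2 * n)) ≠ reflC ((n : ZMod (2 * n)) - 1) :=
  eval0_ne hn (by omega) (by omega) (by omega) (val_k3 hn) (val_k4 hn)

end distinct

lemma main (n : ℕ) (hn : 3 ≤ n) :
    Nat.card (Quot (fun σ τ :
        {σ : ZMod (2 * n) ≃ NN n // ∃ d ∈ Dgrp n, axialP n (d.trans σ)} =>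
      ∃ d ∈ Dgrp n, τ.1 = d.trans σ.1)) = 2 ^ (n - 2) * n.factorial := by
  classical
  haveI : NeZero (2 * n) := ⟨by omega⟩
  have hn0 : 0 < n := by omega
  set S := {σ : ZMod (2 * n) ≃ NN n // ∃ d ∈ Dgrp n, axialP n (d.trans σ)} with hS
  set R : S → S → Prop := fun σ τ => ∃ d ∈ Dgrp n, τ.1 = d.trans σ.1 with hR
  show Nat.card (Quot R) = _
  have hequiv : Equivalence R := by
    constructor
    · intro σ; exact ⟨1, one_mem _, (one_trans σ.1).symm⟩
    · rintro σ τ ⟨d, hd, h⟩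
      exact ⟨d⁻¹, inv_mem hd, by rw [h, trans_mul, mul_inv_cancel, one_trans]⟩
    · rintro σ τ ρ ⟨d, hd, h1⟩ ⟨e, he, h2⟩
      exact ⟨d * e, mul_mem hd he, by rw [h2, h1, trans_mul]⟩
  haveI : Finite (NN n) := Finite.of_equiv _ (e2 n).symm
  set A := {σ : ZMod (2 * n) ≃ NN n // axialP n σ} with hA
  let emb : A → S := fun σ => ⟨σ.1, 1, one_mem _, by rw [one_trans]; exact σ.2⟩
  let q : A → Quot R := fun σ => Quot.mk R (emb σ)
  have hsurj : Function.Surjective q := by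
    intro b
    induction b using Quot.ind with
    | mk s =>
      obtain ⟨d, hd, hax⟩ := s.2
      exact ⟨⟨d.trans s.1, hax⟩, (Quot.sound ⟨d, hd, rfl⟩).symm⟩
  have hKmem : ∀ k : Equiv.Perm (ZMod (2 * n)),
      (k = 1 ∨ k = Equiv.addLeft ((n : ZMod (2 * n))) ∨ k = reflC (-1) ∨
        k = reflC ((n : ZMod (2 * n)) - 1)) → k ∈ Dgrp n := by
    rintro k (rfl | rfl | rfl | rfl)
    · exact one_mem _
    · exact addLeft_mem _ hn0
    · exact reflC_mem _ hn0
    · exact reflC_mem _ hn0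
  have hKax : ∀ (σ : A) (k : Equiv.Perm (ZMod (2 * n))),
      (k = 1 ∨ k = Equiv.addLeft ((n : ZMod (2 * n))) ∨ k = reflC (-1) ∨
        k = reflC ((n : ZMod (2 * n)) - 1)) → axialP n (k.trans σ.1) := by
    rintro σ k (rfl | rfl | rfl | rfl)
    · rw [one_trans]; exact σ.2
    · exact axial_shift hn0 σ.2
    · exact axial_reflA σ.2
    · exact axial_reflB hn0 σ.2
  have hfib : ∀ σ τ : A, q σ = q τ ↔ ∃ k : Equiv.Perm (ZMod (2 * n)),
      (k = 1 ∨ k = Equiv.addLeft ((n : ZMod (2 * n))) ∨ k = reflC (-1) ∨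
        k = reflC ((n : ZMod (2 * n)) - 1)) ∧ σ.1 = k.trans τ.1 := by
    intro σ τ
    constructor
    · intro h
      have h2 : R (emb σ) (emb τ) := (hequiv.eqvGen_iff).mp (Quot.eqvGen_exact h)
      obtain ⟨e, he, h3⟩ := hequiv.symm h2
      exact ⟨e, rigidity hn0 τ.2 σ.2 he h3, h3⟩
    · rintro ⟨k, hk, hke⟩
      exact (Quot.sound (⟨k, hKmem k hk, hke⟩ : R (emb τ) (emb σ))).symm
  -- fiber cardinality
  set K4 : Set (Equiv.Perm (ZMod (2 * n))) :=
    {1, Equiv.addLeft ((n : ZMod (2 * n))), reflC (-1), reflC ((n : ZMod (2 * n)) - 1)} with hK4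
  have hK4mem : ∀ k : Equiv.Perm (ZMod (2 * n)), k ∈ K4 ↔
      (k = 1 ∨ k = Equiv.addLeft ((n : ZMod (2 * n))) ∨ k = reflC (-1) ∨
        k = reflC ((n : ZMod (2 * n)) - 1)) := by
    intro k; simp [hK4]
  have hK4card : Nat.card K4 = 4 := by
    rw [Nat.card_coe_set_eq, hK4]
    rw [Set.ncard_insert_of_notMem (by simp [ne12 hn, ne13 hn, ne14 hn]),
        Set.ncard_insert_of_notMem (by simp [ne23 hn, ne24 hn]),
        Set.ncard_insert_of_notMem (by simp [ne34 hn]),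
        Set.ncard_singleton]
  have hfibcard : ∀ τ : A, Nat.card {σ : A // q σ = q τ} = 4 := by
    intro τ
    rw [← hK4card]
    refine (Nat.card_eq_of_bijective (fun k => ⟨⟨k.1.trans τ.1, hKax τ k.1 ((hK4mem k.1).mp k.2)⟩,
      (hfib _ τ).mpr ⟨k.1, (hK4mem k.1).mp k.2, rfl⟩⟩) ⟨?_, ?_⟩).symm
    · intro k k' h
      have h1 : k.1.trans τ.1 = k'.1.trans τ.1 := congrArg (fun s => s.1.1) h
      refine Subtype.ext (Equiv.ext fun p => ?_)
      exact τ.1.injective (Equiv.ext_iff.mp h1 p)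
    · rintro ⟨σ, hσ⟩
      obtain ⟨k, hk, hke⟩ := (hfib σ τ).mp hσ
      exact ⟨⟨k, (hK4mem k).mpr hk⟩, Subtype.ext (Subtype.ext hke.symm)⟩
  -- counting
  haveI : Finite (ZMod (2 * n) ≃ NN n) :=
    Finite.of_injective (fun e => (e : ZMod (2 * n) → NN n)) (fun a b h => Equiv.coe_fn_injective h)
  haveI : Finite A := Subtype.finite
  haveI : Fintype A := Fintype.ofFinite _
  haveI : Finite (Quot R) := Finite.of_surjective q hsurj
  haveI : Fintype (Quot R) := Fintype.ofFinite _
  have hcardA : Nat.card A = Nat.card (Quot R) * 4 := by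
    calc Nat.card A = Nat.card (Σ b : Quot R, {a : A // q a = b}) :=
          Nat.card_congr (Equiv.sigmaFiberEquiv q).symm
    _ = ∑ b : Quot R, Nat.card {a : A // q a = b} := by
          rw [Nat.card_eq_fintype_card, Fintype.card_sigma]
          exact Finset.sum_congr rfl fun b _ => (Nat.card_eq_fintype_card).symm
    _ = ∑ _b : Quot R, 4 := by
          refine Finset.sum_congr rfl fun b _ => ?_
          obtain ⟨τ, rfl⟩ := hsurj b
          exact hfibcard τ
    _ = Nat.card (Quot R) * 4 := by
          rw [Finset.sum_const, Finset.card_univ, Nat.card_eq_fintype_card, smul_eq_mul]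
  have hA2 : Nat.card A = 2 ^ n * n.factorial := card_axial hn0
  have hpow : (2 : ℕ) ^ n = 4 * 2 ^ (n - 2) := by
    have h2 : n - 2 + 2 = n := by omega
    have h3 : (4 : ℕ) * 2 ^ (n - 2) = 2 ^ (n - 2 + 2) := by rw [pow_add]; ring
    rw [h3, h2]
  have hfin : 4 * Nat.card (Quot R) = 4 * (2 ^ (n - 2) * n.factorial) := by
    rw [← mul_comm (Nat.card (Quot R)) 4, ← hcardA, hA2, hpow]; ring
  exact Nat.eq_of_mul_eq_mul_left (by norm_num) hfin

end AxialAux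

/-- For `n ≥ 3`, the number of axially symmetric dihedral orderings of the
`2n`-element set `N = {±1, …, ±n}` is `2^(n-2) · n!`.  An ordering is a bijection from the
cyclic positions `ℤ/2nℤ` to `N`; dihedral orderings are orbits under precomposition with the
dihedral group (generated by `p ↦ p + 1` and `p ↦ -p`); an ordering `σ` (1-based
`σ_1, …, σ_{2n}`, position `p = i - 1`) is axially symmetric if some dihedral shift of it
satisfies `σ_i = -σ_{2n+1-i}`, i.e. `σ(p) = -σ(-1-p)` for all positions `p`. -/
theorem axially_symmetric_dihedral_orderings_count (n : ℕ) (hn : 3 ≤ n) :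
    let N := {i : ℤ // i ≠ 0 ∧ i.natAbs ≤ n}
    let Dih : Subgroup (Equiv.Perm (ZMod (2 * n))) :=
      Subgroup.closure {Equiv.addLeft (1 : ZMod (2 * n)), Equiv.neg (ZMod (2 * n))}
    let axial : (ZMod (2 * n) ≃ N) → Prop := fun σ =>
      ∀ p : ZMod (2 * n), ((σ p : ℤ)) = -((σ (-1 - p) : ℤ))
    Nat.card (Quot (fun σ τ :
        {σ : ZMod (2 * n) ≃ N // ∃ d ∈ Dih, axial ((d : Equiv.Perm (ZMod (2 * n))).trans σ)} =>
      ∃ d ∈ Dih, τ.1 = (d : Equiv.Perm (ZMod (2 * n))).trans σ.1)) =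
      2 ^ (n - 2) * n.factorial := by
  intro N Dih axial
  exact AxialAux.main n hn
end

section
/- For n ≥ 3, the number of centrally symmetric dihedral orderings of the 2n-element set N = {±1,...,±n} is 2^{n-2} · (n-1)!. -/
set_option linter.unusedSectionVars false
set_option linter.unusedVariables false

set_option linter.unusedSectionVars false
set_option linter.unusedVariables false

namespace CSDO
variable (n : ℕ)

abbrev NN := {i : ℤ // i ≠ 0 ∧ i.natAbs ≤ n}

def nEquiv : Fin n × Bool ≃ NN n where
  toFun x := ⟨if x.2 then (x.1 : ℤ) + 1 else -((x.1 : ℤ) + 1), by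
    obtain ⟨i, b⟩ := x
    have := i.2
    constructor <;> cases b <;> simp <;> omega⟩
  invFun x := (⟨x.1.natAbs - 1, by have h1 := x.2.1; have h2 := x.2.2; omega⟩,
    decide (0 < x.1))
  left_inv := by
    rintro ⟨i, b⟩
    have := i.2
    cases b <;> simp [Fin.ext_iff] <;> omega
  right_inv := by
    rintro ⟨x, hx1, hx2⟩
    have h1 : x ≠ 0 := hx1
    ext
    simp only []
    by_cases h : 0 < x <;> simp [h] <;> omega

instance : Fintype (NN n) := Fintype.ofEquiv _ (nEquiv n)

lemma card_NN : Fintype.card (NN n) = 2 * n := by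
  rw [← Fintype.card_congr (nEquiv n)]
  simp [mul_comm]

lemma valn (hn : 3 ≤ n) [NeZero (2 * n)] : ((n : ℕ) : ZMod (2 * n)).val = n :=
  ZMod.val_natCast_of_lt (by omega)

lemma val_add_n (hn : 3 ≤ n) [NeZero (2 * n)] (p : ZMod (2 * n)) :
    (p + (n : ℕ)).val = if p.val < n then p.val + n else p.val - n := by
  have hv := ZMod.val_lt p
  rw [ZMod.val_add, valn n hn]
  split
  · exact Nat.mod_eq_of_lt (by omega)
  · rw [Nat.mod_eq_sub_mod (by omega), Nat.mod_eq_of_lt (by omega)]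
    omega

lemma nn_zero (hn : 3 ≤ n) [NeZero (2 * n)] :
    ((n : ℕ) : ZMod (2 * n)) + (n : ℕ) = 0 := by
  have : (((2 * n : ℕ)) : ZMod (2 * n)) = 0 := ZMod.natCast_self _
  push_cast at this
  linear_combination this

lemma neg_n (hn : 3 ≤ n) [NeZero (2 * n)] :
    -((n : ℕ) : ZMod (2 * n)) = (n : ℕ) := by
  have := nn_zero n hn
  linear_combination -this

-- value lemmas for nEquiv
lemma nEquiv_natAbs (j : Fin n) (c : Bool) : (nEquiv n (j, c)).1.natAbs = j + 1 := by
  cases c <;> simp [nEquiv] <;> omega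

lemma nEquiv_neg (j : Fin n) (c : Bool) : (nEquiv n (j, !c)).1 = -(nEquiv n (j, c)).1 := by
  cases c <;> simp [nEquiv]

lemma nEquiv_sign (j : Fin n) (c : Bool) : (0 < (nEquiv n (j, c)).1) ↔ c = true := by
  cases c <;> simp [nEquiv] <;> omega

section Central
variable [NeZero (2 * n)]

def Cen := {σ : ZMod (2 * n) ≃ NN n // ∀ p : ZMod (2 * n),
  ((σ (p + ((n : ℕ) : ZMod (2 * n))) : ℤ)) = -((σ p : ℤ))}

def pos (i : Fin n) : ZMod (2 * n) := ((i : ℕ) : ZMod (2 * n))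

lemma val_pos (hn : 3 ≤ n) (i : Fin n) : (pos n i).val = (i : ℕ) :=
  ZMod.val_natCast_of_lt (by have := i.2; omega)

lemma self_eq_pos (hn : 3 ≤ n) (p : ZMod (2 * n)) (h : p.val < n) :
    p = pos n ⟨p.val, h⟩ := by
  simp only [pos]
  rw [ZMod.natCast_val, ZMod.cast_id]

lemma abs_inj (hn : 3 ≤ n) (σ : Cen n) (i j : Fin n)
    (h : (σ.1 (pos n i)).1.natAbs = (σ.1 (pos n j)).1.natAbs) : i = j := by
  rcases Int.natAbs_eq_natAbs_iff.mp h with h' | h'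
  · have : σ.1 (pos n i) = σ.1 (pos n j) := Subtype.ext h'
    have h2 : pos n i = pos n j := σ.1.injective this
    have h3 := congrArg ZMod.val h2
    rw [val_pos n hn, val_pos n hn] at h3
    exact Fin.ext h3
  · have hc := σ.2 (pos n j)
    have : σ.1 (pos n i) = σ.1 (pos n j + (n : ℕ)) := Subtype.ext (by rw [hc]; exact h')
    have h2 : pos n i = pos n j + (n : ℕ) := σ.1.injective this
    have h3 := congrArg ZMod.val h2
    rw [val_pos n hn, val_add_n n hn, val_pos n hn] at h3
    have hi := i.2
    have hj := j.2
    simp only [if_pos hj] at h3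
    omega

lemma cen_ext (hn : 3 ≤ n) (σ τ : Cen n)
    (h : ∀ i : Fin n, σ.1 (pos n i) = τ.1 (pos n i)) : σ = τ := by
  have key : ∀ p : ZMod (2 * n), p.val < n → σ.1 p = τ.1 p := by
    intro p hp
    rw [self_eq_pos n hn p hp]
    exact h _
  apply Subtype.ext
  apply Equiv.ext
  intro p
  by_cases hp : p.val < n
  · exact key p hp
  · have hq : (p + ((n : ℕ) : ZMod (2 * n))).val < n := by
      rw [val_add_n n hn, if_neg hp]
      have := ZMod.val_lt p
      omega
    have hpq : (p + ((n : ℕ) : ZMod (2 * n))) + ((n : ℕ) : ZMod (2 * n)) = p := by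
      rw [add_assoc, nn_zero n hn, add_zero]
    have h1 := σ.2 (p + ((n : ℕ) : ZMod (2 * n)))
    have h2 := τ.2 (p + ((n : ℕ) : ZMod (2 * n)))
    rw [hpq] at h1 h2
    apply Subtype.ext
    rw [h1, h2, key _ hq]

end Central
end CSDO

namespace CSDO
variable (n : ℕ) [NeZero (2 * n)]

def gfun (bf : Fin n → Bool) (e : Fin n ≃ Fin n) (p : ZMod (2 * n)) : NN n :=
  if h : p.val < n then nEquiv n (e ⟨p.val, h⟩, bf ⟨p.val, h⟩)
  else nEquiv n (e ⟨p.val - n, by have := ZMod.val_lt p; omega⟩,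
    !(bf ⟨p.val - n, by have := ZMod.val_lt p; omega⟩))

lemma gfun_low (bf : Fin n → Bool) (e : Fin n ≃ Fin n) (p : ZMod (2 * n))
    (v : ℕ) (hv : p.val = v) (h : v < n) :
    gfun n bf e p = nEquiv n (e ⟨v, h⟩, bf ⟨v, h⟩) := by
  subst hv
  exact dif_pos h

lemma gfun_high (bf : Fin n → Bool) (e : Fin n ≃ Fin n) (p : ZMod (2 * n))
    (v : ℕ) (hv : p.val = n + v) (h : v < n) :
    gfun n bf e p = nEquiv n (e ⟨v, h⟩, !(bf ⟨v, h⟩)) := by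
  have h2 : ¬ p.val < n := by omega
  rw [gfun, dif_neg h2]
  obtain rfl : v = p.val - n := by omega
  rfl

lemma gfun_inj (hn : 3 ≤ n) (bf : Fin n → Bool) (e : Fin n ≃ Fin n) :
    Function.Injective (gfun n bf e) := by
  intro p q h
  have hp := ZMod.val_lt p
  have hq := ZMod.val_lt q
  apply ZMod.val_injective
  by_cases h1 : p.val < n <;> by_cases h2 : q.val < n
  · rw [gfun_low n bf e p p.val rfl h1, gfun_low n bf e q q.val rfl h2] at h
    have := (nEquiv n).injective h
    have he := congrArg Prod.fst this
    simp only at he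
    have := e.injective he
    simpa [Fin.ext_iff] using this
  · rw [gfun_low n bf e p p.val rfl h1,
      gfun_high n bf e q (q.val - n) (by omega) (by omega)] at h
    have := (nEquiv n).injective h
    have he := congrArg Prod.fst this
    have hb := congrArg Prod.snd this
    simp only at he hb
    have := e.injective he
    rw [this] at hb
    exact absurd hb (by simp)
  · rw [gfun_high n bf e p (p.val - n) (by omega) (by omega),
      gfun_low n bf e q q.val rfl h2] at h
    have := (nEquiv n).injective h
    have he := congrArg Prod.fst this
    have hb := congrArg Prod.snd this
    simp only at he hb
    have := e.injective he
    rw [this] at hb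
    exact absurd hb.symm (by simp)
  · rw [gfun_high n bf e p (p.val - n) (by omega) (by omega),
      gfun_high n bf e q (q.val - n) (by omega) (by omega)] at h
    have := (nEquiv n).injective h
    have he := congrArg Prod.fst this
    simp only at he
    have := e.injective he
    simp [Fin.ext_iff] at this
    omega

lemma gfun_bij (hn : 3 ≤ n) (bf : Fin n → Bool) (e : Fin n ≃ Fin n) :
    Function.Bijective (gfun n bf e) := by
  rw [Fintype.bijective_iff_injective_and_card]
  exact ⟨gfun_inj n hn bf e, by rw [ZMod.card, card_NN]⟩

end CSDO

namespace CSDO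
variable (n : ℕ) [NeZero (2 * n)]

noncomputable def F (hn : 3 ≤ n) (σ : Cen n) : (Fin n → Bool) × (Fin n ≃ Fin n) :=
  (fun i => decide (0 < (σ.1 (pos n i)).1),
   Equiv.ofBijective
     (fun i => (⟨(σ.1 (pos n i)).1.natAbs - 1, by
        have h1 := (σ.1 (pos n i)).2.1
        have h2 := (σ.1 (pos n i)).2.2
        omega⟩ : Fin n))
     (Finite.injective_iff_bijective.mp (by
        intro i j h
        apply abs_inj n hn σ i j
        have h1 := (σ.1 (pos n i)).2.1
        have h2 := (σ.1 (pos n j)).2.1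
        simp [Fin.ext_iff] at h
        omega)))

lemma F_inj (hn : 3 ≤ n) : Function.Injective (F n hn) := by
  intro σ τ h
  have hb := congrArg Prod.fst h
  have he := congrArg Prod.snd h
  simp only [F] at hb he
  apply cen_ext n hn
  intro i
  have hbi := congrFun hb i
  have hei := congrArg (fun (x : Fin n ≃ Fin n) => (x i).val) he
  simp only [Equiv.ofBijective_apply] at hei
  have h1 := (σ.1 (pos n i)).2.1
  have h2 := (τ.1 (pos n i)).2.1
  have habs : (σ.1 (pos n i)).1.natAbs = (τ.1 (pos n i)).1.natAbs := by omega
  apply Subtype.ext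
  have hs : (0 < (σ.1 (pos n i)).1) ↔ (0 < (τ.1 (pos n i)).1) :=
    decide_eq_decide.mp hbi
  by_cases hp : 0 < (σ.1 (pos n i)).1
  · have := hs.mp hp
    omega
  · have : ¬ 0 < (τ.1 (pos n i)).1 := fun hh => hp (hs.mpr hh)
    omega

end CSDO

namespace CSDO
variable (n : ℕ) [NeZero (2 * n)]

lemma gfun_central (hn : 3 ≤ n) (bf : Fin n → Bool) (e : Fin n ≃ Fin n)
    (p : ZMod (2 * n)) :
    ((gfun n bf e (p + ((n : ℕ) : ZMod (2 * n)))).1 : ℤ) = -((gfun n bf e p).1) := by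
  have hp := ZMod.val_lt p
  have hvn := val_add_n n hn p
  by_cases h : p.val < n
  · rw [if_pos h] at hvn
    rw [gfun_high n bf e _ p.val (by omega) h, gfun_low n bf e p p.val rfl h,
      nEquiv_neg]
  · rw [if_neg h] at hvn
    rw [gfun_low n bf e _ (p.val - n) (by omega) (by omega),
      gfun_high n bf e p (p.val - n) (by omega) (by omega), nEquiv_neg]
    ring

noncomputable def sigmaOf (hn : 3 ≤ n) (bf : Fin n → Bool) (e : Fin n ≃ Fin n) : Cen n :=
  ⟨Equiv.ofBijective (gfun n bf e) (gfun_bij n hn bf e), by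
    intro p
    exact gfun_central n hn bf e p⟩

lemma F_surj (hn : 3 ≤ n) : Function.Surjective (F n hn) := by
  rintro ⟨bf, e⟩
  refine ⟨sigmaOf n hn bf e, ?_⟩
  have happ : ∀ i : Fin n, (sigmaOf n hn bf e).1 (pos n i) = nEquiv n (e i, bf i) := by
    intro i
    show gfun n bf e (pos n i) = _
    rw [gfun_low n bf e _ (i : ℕ) (val_pos n hn i) i.2]
  ext i
  · show decide (0 < ((sigmaOf n hn bf e).1 (pos n i)).1) = bf i
    rw [happ i]
    rcases hb : bf i with _ | _
    · simp only [decide_eq_false_iff_not]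
      rw [nEquiv_sign]
      simp
    · simp only [decide_eq_true_eq]
      rw [nEquiv_sign]
  · show (((F n hn (sigmaOf n hn bf e)).2 i) : Fin n).val = (e i).val
    show ((sigmaOf n hn bf e).1 (pos n i)).1.natAbs - 1 = (e i).val
    rw [happ i, nEquiv_natAbs]
    omega

noncomputable def cenEquiv (hn : 3 ≤ n) : Cen n ≃ (Fin n → Bool) × (Fin n ≃ Fin n) :=
  Equiv.ofBijective (F n hn) ⟨F_inj n hn, F_surj n hn⟩

lemma card_Cen (hn : 3 ≤ n) : Nat.card (Cen n) = 2 ^ n * n.factorial := by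
  rw [Nat.card_congr (cenEquiv n hn), Nat.card_prod]
  simp [Nat.card_eq_fintype_card, Fintype.card_perm]

end CSDO




set_option linter.unusedSectionVars false
set_option linter.unusedVariables false

namespace CSDO
variable (n : ℕ) [NeZero (2 * n)]

abbrev Dih : Subgroup (Equiv.Perm (ZMod (2 * n))) :=
  Subgroup.closure {Equiv.addLeft (1 : ZMod (2 * n)), Equiv.neg (ZMod (2 * n))}

def aff (b : Bool) (k : ZMod (2 * n)) : Equiv.Perm (ZMod (2 * n)) :=
  (if b then Equiv.neg _ else Equiv.refl _).trans (Equiv.addLeft k)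

@[simp] lemma aff_apply (b : Bool) (k x : ZMod (2 * n)) :
    aff n b k x = k + (if b then -x else x) := by
  cases b <;> rfl

lemma aff_mul (b b' : Bool) (k k' : ZMod (2 * n)) :
    aff n b k * aff n b' k' = aff n (xor b b') (k + (if b then -k' else k')) := by
  ext x
  cases b <;> cases b' <;> simp [Equiv.Perm.mul_apply] <;> ring

lemma aff_one : aff n false 0 = 1 := by
  ext x; simp

lemma addLeft_mem (k : ZMod (2 * n)) : Equiv.addLeft k ∈ Dih n := by
  have key : ∀ j : ℕ, Equiv.addLeft ((j : ZMod (2 * n))) ∈ Dih n := by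
    intro j
    induction j with
    | zero => simpa using (Dih n).one_mem
    | succ j ih =>
      have h1 : Equiv.addLeft (1 : ZMod (2 * n)) ∈ Dih n :=
        Subgroup.subset_closure (by simp)
      have : Equiv.addLeft ((j + 1 : ℕ) : ZMod (2 * n)) =
          Equiv.addLeft ((j : ℕ) : ZMod (2 * n)) * Equiv.addLeft (1 : ZMod (2 * n)) := by
        ext x; simp only [Equiv.Perm.mul_apply, Equiv.coe_addLeft]; push_cast; ring
      rw [this]
      exact mul_mem ih h1
  have := key k.val
  rwa [ZMod.natCast_val, ZMod.cast_id] at this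
end CSDO

namespace CSDO
variable (n : ℕ) [NeZero (2 * n)]

lemma aff_mem (b : Bool) (k : ZMod (2 * n)) : aff n b k ∈ Dih n := by
  cases b
  · have : aff n false k = Equiv.addLeft k := by ext x; simp
    rw [this]; exact addLeft_mem n k
  · have hneg : Equiv.neg (ZMod (2 * n)) ∈ Dih n := Subgroup.subset_closure (by simp)
    have : aff n true k = Equiv.addLeft k * Equiv.neg (ZMod (2 * n)) := by
      ext x; simp [Equiv.Perm.mul_apply]
    rw [this]
    exact mul_mem (addLeft_mem n k) hneg

lemma mem_iff_aff (d : Equiv.Perm (ZMod (2 * n))) :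
    d ∈ Dih n ↔ ∃ b k, d = aff n b k := by
  constructor
  · intro hd
    induction hd using Subgroup.closure_induction with
    | mem x hx =>
      rcases hx with h | h
      · exact ⟨false, 1, by rw [h]; ext x; simp⟩
      · exact ⟨true, 0, by rw [h]; ext x; simp⟩
    | one => exact ⟨false, 0, (aff_one n).symm⟩
    | mul x y hx hy ihx ihy =>
      obtain ⟨b, k, rfl⟩ := ihx
      obtain ⟨b', k', rfl⟩ := ihy
      exact ⟨_, _, (aff_mul n b b' k k')⟩
    | inv x hx ihx =>
      obtain ⟨b, k, rfl⟩ := ihx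
      refine ⟨b, if b then k else -k, ?_⟩
      rw [eq_comm, eq_inv_iff_mul_eq_one, aff_mul]
      cases b <;> simp <;> exact aff_one n
  · rintro ⟨b, k, rfl⟩; exact aff_mem n b k

lemma aff_inj (hn : 3 ≤ n) : Function.Injective
    (fun x : Bool × ZMod (2 * n) => (⟨aff n x.1 x.2, aff_mem n x.1 x.2⟩ : Dih n)) := by
  rintro ⟨b, k⟩ ⟨b', k'⟩ h
  simp only [Subtype.mk.injEq] at h
  have h0 := congrArg (fun d : Equiv.Perm (ZMod (2 * n)) => d 0) h
  simp at h0
  have h1 := congrArg (fun d : Equiv.Perm (ZMod (2 * n)) => d 1) h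
  simp only [aff_apply] at h1
  rw [h0] at h1
  have h1' : (if b then -1 else 1 : ZMod (2 * n)) = if b' then -1 else 1 :=
    by exact add_left_cancel h1
  have hb : b = b' := by
    by_contra hbb
    have h2 : (1 : ZMod (2 * n)) = -1 := by
      cases b <;> cases b'
      · exact absurd rfl hbb
      · simpa using h1'
      · simpa using h1'.symm
      · exact absurd rfl hbb
    have h3 : ((2 : ℕ) : ZMod (2 * n)) = 0 := by push_cast; linear_combination h2
    rw [ZMod.natCast_eq_zero_iff] at h3
    have := Nat.le_of_dvd (by norm_num) h3
    omega
  subst hb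
  simp [h0]

noncomputable def dihEquiv (hn : 3 ≤ n) : Bool × ZMod (2 * n) ≃ Dih n :=
  Equiv.ofBijective _ ⟨aff_inj n hn, by
    rintro ⟨d, hd⟩
    obtain ⟨b, k, rfl⟩ := (mem_iff_aff n d).mp hd
    exact ⟨(b, k), rfl⟩⟩

lemma card_Dih (hn : 3 ≤ n) : Nat.card (Dih n) = 4 * n := by
  rw [← Nat.card_congr (dihEquiv n hn), Nat.card_prod, Nat.card_zmod]
  simp [Nat.card_eq_fintype_card]
  ring

lemma dih_shift (hn : 3 ≤ n) (d : Equiv.Perm (ZMod (2 * n))) (hd : d ∈ Dih n)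
    (p : ZMod (2 * n)) : d (p + (n : ℕ)) = d p + (n : ℕ) := by
  obtain ⟨b, k, rfl⟩ := (mem_iff_aff n d).mp hd
  cases b
  · have h1 : aff n false k (p + (n : ℕ)) = k + (p + (n : ℕ)) := by simp
    have h2 : aff n false k p = k + p := by simp
    rw [h1, h2]; ring
  · have h1 : aff n true k (p + (n : ℕ)) = k + -(p + (n : ℕ)) := by simp
    have h2 : aff n true k p = k + -p := by simp
    rw [h1, h2, neg_add, neg_n n hn]; ring

end CSDO

namespace CSDO
variable (n : ℕ) [NeZero (2 * n)]

def IsCentral (σ : ZMod (2 * n) ≃ NN n) : Prop :=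
  ∀ p : ZMod (2 * n), ((σ (p + (n : ZMod (2 * n))) : ℤ)) = -((σ p : ℤ))

lemma central_trans (hn : 3 ≤ n) (d : Equiv.Perm (ZMod (2 * n))) (hd : d ∈ Dih n)
    (σ : ZMod (2 * n) ≃ NN n) (h : IsCentral n σ) : IsCentral n (d.trans σ) := by
  intro p
  show ((σ (d (p + (n : ZMod (2 * n)))) : ℤ)) = -((σ (d p) : ℤ))
  rw [show d (p + (n : ZMod (2 * n))) = d p + (n : ZMod (2 * n)) from
    dih_shift n hn d hd p]
  exact h (d p)

lemma pred_iff (hn : 3 ≤ n) (σ : ZMod (2 * n) ≃ NN n) :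
    (∃ d ∈ Dih n, IsCentral n (d.trans σ)) ↔ IsCentral n σ := by
  constructor
  · rintro ⟨d, hd, h⟩
    have h2 := central_trans n hn d⁻¹ (inv_mem hd) _ h
    have heq : (d⁻¹ : Equiv.Perm (ZMod (2 * n))).trans (d.trans σ) = σ := by
      ext x
      simp
    rwa [heq] at h2
  · intro h
    refine ⟨1, one_mem _, ?_⟩
    rwa [show ((1 : Equiv.Perm (ZMod (2 * n))) : Equiv.Perm (ZMod (2 * n))).trans σ = σ
      from Equiv.ext fun x => rfl]

abbrev SS := {σ : ZMod (2 * n) ≃ NN n // ∃ d ∈ Dih n, IsCentral n (d.trans σ)}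

def rel : SS n → SS n → Prop := fun σ τ => ∃ d ∈ Dih n, τ.1 = d.trans σ.1

lemma rel_equiv : Equivalence (rel n) := by
  constructor
  · intro σ
    exact ⟨1, one_mem _, Equiv.ext fun x => rfl⟩
  · rintro σ τ ⟨d, hd, h⟩
    refine ⟨d⁻¹, inv_mem hd, ?_⟩
    rw [h]
    ext x
    simp
  · rintro σ τ ρ ⟨d, hd, h1⟩ ⟨d', hd', h2⟩
    refine ⟨d * d', mul_mem hd hd', ?_⟩
    rw [h2, h1]
    rfl

def st : Setoid (SS n) := ⟨rel n, rel_equiv n⟩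

noncomputable def fiberEquiv (hn : 3 ≤ n) (q : Quotient (st n)) :
    (Dih n) ≃ {σ : SS n // Quotient.mk (st n) σ = q} := by
  apply Equiv.ofBijective (fun d => ⟨⟨(d : Equiv.Perm (ZMod (2 * n))).trans q.out.1, by
    rw [pred_iff n hn]
    exact central_trans n hn d.1 d.2 _ ((pred_iff n hn _).mp q.out.2)⟩, by
      exact ((@Quotient.sound _ (st n) _ _ ⟨d.1, d.2, rfl⟩).symm.trans
        (Quotient.out_eq q))⟩)
  constructor
  · rintro ⟨d, hd⟩ ⟨d', hd'⟩ h
    simp only [Subtype.mk.injEq] at h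
    apply Subtype.ext
    apply Equiv.ext
    intro x
    have := congrArg (fun (e : ZMod (2 * n) ≃ NN n) => e x) h
    simp only [Equiv.trans_apply] at this
    exact q.out.1.injective this
  · rintro ⟨σ, hσ⟩
    have h := Quotient.exact ((Quotient.out_eq q).trans hσ.symm)
    obtain ⟨d, hd, heq⟩ := h
    exact ⟨⟨d, hd⟩, Subtype.ext (Subtype.ext heq.symm)⟩

noncomputable def mainEquiv (hn : 3 ≤ n) : SS n ≃ Quotient (st n) × Dih n :=
  (Equiv.sigmaFiberEquiv (Quotient.mk (st n))).symm.trans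
    ((Equiv.sigmaCongrRight fun q => (fiberEquiv n hn q).symm).trans
      (Equiv.sigmaEquivProd _ _))

lemma card_SS (hn : 3 ≤ n) : Nat.card (SS n) = 2 ^ n * n.factorial := by
  rw [← card_Cen n hn]
  apply Nat.card_congr
  exact Equiv.subtypeEquivRight (fun σ => pred_iff n hn σ)

lemma card_quot (hn : 3 ≤ n) :
    Nat.card (Quotient (st n)) = 2 ^ (n - 2) * (n - 1).factorial := by
  have h1 := card_SS n hn
  rw [Nat.card_congr (mainEquiv n hn), Nat.card_prod, card_Dih n hn] at h1
  have h2 : 2 ^ n * n.factorial = (2 ^ (n - 2) * (n - 1).factorial) * (4 * n) := by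
    obtain ⟨m, rfl⟩ : ∃ m, n = m + 3 := ⟨n - 3, by omega⟩
    have e1 : m + 3 - 2 = m + 1 := rfl
    have e2 : m + 3 - 1 = m + 2 := rfl
    rw [e1, e2, show (m + 3).factorial = (m + 3) * (m + 2).factorial from
      Nat.factorial_succ (m + 2),
      show (2 : ℕ) ^ (m + 3) = 2 ^ (m + 1) * 4 by rw [pow_succ, pow_succ]; ring]
    ring
  rw [h2] at h1
  have h4 : 0 < 4 * n := by omega
  exact Nat.eq_of_mul_eq_mul_right h4 h1

end CSDO




/-- For `n ≥ 3`, the number of centrally symmetric dihedral orderings of the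
`2n`-element set `N = {±1, …, ±n}` is `2^(n-2) · (n-1)!`.  An ordering is a bijection from
the cyclic positions `ℤ/2nℤ` to `N`; dihedral orderings are orbits under precomposition with
the dihedral group; an ordering is centrally symmetric if some dihedral shift of it satisfies
`σ_{i+n} = -σ_i`, i.e. `σ(p + n) = -σ(p)` for all positions `p`. -/
theorem centrally_symmetric_dihedral_orderings_count (n : ℕ) (hn : 3 ≤ n) :
    let N := {i : ℤ // i ≠ 0 ∧ i.natAbs ≤ n}
    let Dih : Subgroup (Equiv.Perm (ZMod (2 * n))) :=
      Subgroup.closure {Equiv.addLeft (1 : ZMod (2 * n)), Equiv.neg (ZMod (2 * n))}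
    let central : (ZMod (2 * n) ≃ N) → Prop := fun σ =>
      ∀ p : ZMod (2 * n), ((σ (p + (n : ZMod (2 * n))) : ℤ)) = -((σ p : ℤ))
    Nat.card (Quot (fun σ τ :
        {σ : ZMod (2 * n) ≃ N // ∃ d ∈ Dih, central ((d : Equiv.Perm (ZMod (2 * n))).trans σ)} =>
      ∃ d ∈ Dih, τ.1 = (d : Equiv.Perm (ZMod (2 * n))).trans σ.1)) =
      2 ^ (n - 2) * (n - 1).factorial := by
  intro N Dih central
  haveI : NeZero (2 * n) := ⟨by omega⟩
  exact CSDO.card_quot n hn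
end

section
/- No dihedral ordering of N = {±1,...,±n} (n ≥ 3) is both axially symmetric and centrally symmetric. -/
/-!
Both symmetries survive the dihedral relabelling: the axial one says `σ (k - q) = -σ q` for some
`k`, the central one `σ (q + n) = -σ q`. As `σ` is injective, the reflection `q ↦ k - q` would
then coincide with the translation `q ↦ q + n`, forcing `2 = 0` in `ℤ/2nℤ`.
-/

section Dihedral

variable {G : Type*} [AddCommGroup G]

theorem exists_add_or_sub_of_mem_closure_addLeft_neg {a : G} {d : Equiv.Perm G}
    (hd : d ∈ Subgroup.closure {Equiv.addLeft a, Equiv.neg G}) :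
    ∃ c : G, (∀ p, d p = c + p) ∨ (∀ p, d p = c - p) := by
  induction hd using Subgroup.closure_induction with
  | mem x hx =>
    rcases hx with rfl | rfl
    · exact ⟨a, Or.inl fun p => rfl⟩
    · exact ⟨0, Or.inr fun p => (zero_sub p).symm⟩
  | one => exact ⟨0, Or.inl fun p => (zero_add p).symm⟩
  | mul x y _ _ ihx ihy =>
    obtain ⟨a, ha | ha⟩ := ihx <;> obtain ⟨b, hb | hb⟩ := ihy
    · exact ⟨a + b, Or.inl fun p => by rw [Equiv.Perm.mul_apply, hb, ha, add_assoc]⟩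
    · exact ⟨a + b, Or.inr fun p => by rw [Equiv.Perm.mul_apply, hb, ha]; abel⟩
    · exact ⟨a - b, Or.inr fun p => by rw [Equiv.Perm.mul_apply, hb, ha]; abel⟩
    · exact ⟨a - b, Or.inl fun p => by rw [Equiv.Perm.mul_apply, hb, ha]; abel⟩
  | inv x _ ihx =>
    obtain ⟨a, ha | ha⟩ := ihx
    · exact ⟨-a, Or.inl fun p => Equiv.Perm.inv_eq_iff_eq.mpr (by rw [ha]; abel)⟩
    · exact ⟨a, Or.inr fun p => Equiv.Perm.inv_eq_iff_eq.mpr (by rw [ha]; abel)⟩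

variable {R : Type*} [InvolutiveNeg R] {f : G → R} {d : G → G} {c : G}

theorem exists_apply_sub_eq_neg_of_comp_affine {b : G}
    (hd : (∀ p, d p = c + p) ∨ (∀ p, d p = c - p))
    (hf : ∀ p, f (d p) = -f (d (b - p))) : ∃ k, ∀ q, f (k - q) = -f q := by
  rcases hd with hd | hd
  · refine ⟨c + c + b, fun q => ?_⟩
    have h := hf (q - c)
    rw [hd, hd, add_sub_cancel, show c + (b - (q - c)) = c + c + b - q by abel] at h
    rw [h, neg_neg]
  · refine ⟨c + c - b, fun q => ?_⟩
    have h := hf (c - q)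
    rw [hd, hd, sub_sub_cancel, show c - (b - (c - q)) = c + c - b - q by abel] at h
    rw [h, neg_neg]

theorem apply_add_eq_neg_of_comp_affine {a : G} (ha : a + a = 0)
    (hd : (∀ p, d p = c + p) ∨ (∀ p, d p = c - p))
    (hf : ∀ p, f (d (p + a)) = -f (d p)) (q : G) : f (q + a) = -f q := by
  rcases hd with hd | hd
  · have h := hf (q - c)
    rwa [hd, hd, add_sub_cancel, show c + (q - c + a) = q + a by abel] at h
  · have h := hf (c - q)
    have hna : -a = a := neg_eq_of_add_eq_zero_left ha
    rwa [hd, hd, sub_sub_cancel, sub_add, sub_sub_cancel, sub_eq_add_neg, hna] at h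

end Dihedral

theorem sub_ne_add_of_two_ne_zero {R : Type*} [CommRing R] (h2 : (2 : R) ≠ 0) (k a : R) :
    ¬ ∀ q, k - q = q + a := by
  intro h
  have h0 := h 0
  have h1 := h 1
  rw [sub_zero, zero_add] at h0
  exact h2 (by linear_combination h0 - h1)

theorem ZMod.two_ne_zero_of_two_lt {m : ℕ} (hm : 2 < m) : (2 : ZMod m) ≠ 0 := by
  have : Fact (1 < m) := ⟨by omega⟩
  intro h
  have := congrArg ZMod.val h
  rw [ZMod.val_two_eq_two_mod, Nat.mod_eq_of_lt hm, ZMod.val_zero] at this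
  omega

/-- For `n ≥ 3`, no dihedral ordering of `N = {±1, …, ±n}` is both axially
symmetric and centrally symmetric: no bijection `σ : ℤ/2nℤ → N` has both a dihedral shift
satisfying the axial condition `σ(p) = -σ(-1-p)` and a dihedral shift satisfying the central
condition `σ(p + n) = -σ(p)`. -/
theorem no_ordering_both_axially_and_centrally_symmetric (n : ℕ) (hn : 3 ≤ n) :
    let N := {i : ℤ // i ≠ 0 ∧ i.natAbs ≤ n}
    let Dih : Subgroup (Equiv.Perm (ZMod (2 * n))) :=
      Subgroup.closure {Equiv.addLeft (1 : ZMod (2 * n)), Equiv.neg (ZMod (2 * n))}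
    let axial : (ZMod (2 * n) ≃ N) → Prop := fun σ =>
      ∀ p : ZMod (2 * n), ((σ p : ℤ)) = -((σ (-1 - p) : ℤ))
    let central : (ZMod (2 * n) ≃ N) → Prop := fun σ =>
      ∀ p : ZMod (2 * n), ((σ (p + (n : ZMod (2 * n))) : ℤ)) = -((σ p : ℤ))
    ¬ ∃ σ : ZMod (2 * n) ≃ N,
      (∃ d ∈ Dih, axial ((d : Equiv.Perm (ZMod (2 * n))).trans σ)) ∧
      (∃ d ∈ Dih, central ((d : Equiv.Perm (ZMod (2 * n))).trans σ)) := by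
  intro N Dih axial central
  rintro ⟨σ, ⟨d₁, hd₁, hax⟩, ⟨d₂, hd₂, hcen⟩⟩
  obtain ⟨c₁, hc₁⟩ := exists_add_or_sub_of_mem_closure_addLeft_neg hd₁
  obtain ⟨c₂, hc₂⟩ := exists_add_or_sub_of_mem_closure_addLeft_neg hd₂
  have hnn : (n : ZMod (2 * n)) + n = 0 := by
    rw [← two_mul]
    exact_mod_cast ZMod.natCast_self (2 * n)
  obtain ⟨k, hk⟩ := exists_apply_sub_eq_neg_of_comp_affine (f := fun p => (σ p : ℤ)) hc₁ hax
  have hC := apply_add_eq_neg_of_comp_affine (f := fun p => (σ p : ℤ)) hnn hc₂ hcen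
  have hσ : Function.Injective fun p => (σ p : ℤ) := Subtype.coe_injective.comp σ.injective
  refine sub_ne_add_of_two_ne_zero (ZMod.two_ne_zero_of_two_lt (by omega)) k n fun q => ?_
  exact hσ (show (σ (k - q) : ℤ) = σ (q + n) by rw [hk, hC])
end

section
/- Let P be a regular 2n-gon with a distinguished longest diagonal l (a diameter through two opposite vertices). Then the number of coarsest nontrivial axially symmetric subdivisions of P with respect to l is (n+2)(n-1)/2. Equivalently, the number of reflection-orbits of diagonals d of P such that d is either fixed by the reflection across l or does not cross l is 1 + (n-1) + (n+1)(n-2)/2 = (n+2)(n-1)/2. -/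
/-- `x` lies strictly inside the counterclockwise open arc from `a` to `b`
on the cycle `ℤ/mℤ`. -/
def Betw {m : ℕ} (a b x : ZMod m) : Prop :=
  x ≠ a ∧ (x - a).val < (b - a).val

/-- Two chords of a convex `m`-gon (with vertices `ℤ/mℤ`) cross, i.e. are distinct and
share interior points: their endpoint sets are disjoint and exactly one endpoint of the
second lies strictly inside one of the open arcs determined by the first. -/
def Crosses {m : ℕ} (p q : Sym2 (ZMod m)) : Prop :=
  ∃ a b c d : ZMod m, p = s(a, b) ∧ q = s(c, d) ∧
    a ≠ c ∧ a ≠ d ∧ b ≠ c ∧ b ≠ d ∧ (Betw a b c ↔ ¬ Betw a b d)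

/-- A diagonal of the `m`-gon: an unordered pair of distinct, non-adjacent vertices. -/
def IsDiagonal {m : ℕ} (p : Sym2 (ZMod m)) : Prop :=
  ∃ a b : ZMod m, p = s(a, b) ∧ a ≠ b ∧ a - b ≠ 1 ∧ b - a ≠ 1

/-!
Folding the `2n`-gon along `l` sends a vertex `x` to its distance `|x.valMinAbs| ∈ [0, n]` from
vertex `0`, and a diagonal to the sorted pair of the images of its endpoints. A diagonal that is
fixed by the reflection or does not cross `l` is either perpendicular to `l` (endpoints `x` and
`-x`) or, after a possible reflection, has both endpoints in the closed half `{0, …, n}`, on which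
folding is injective. Hence two such diagonals fold to the same pair exactly when they are equal
or mirror images, and their orbits correspond to the pairs `(i, i)` with `0 < i < n` and `(i, j)`
with `i + 2 ≤ j ≤ n`: there are `(n - 1) + n (n - 1) / 2 = (n + 2) (n - 1) / 2` of them.
-/

theorem Nat.card_quot_eq_card_range {α β : Type*} {r : α → α → Prop} (f : α → β)
    (hf : ∀ a b, r a b ↔ f a = f b) : Nat.card (Quot r) = Nat.card (Set.range f) :=
  Nat.card_congr <|
    (Quot.congrRight fun a b => (hf a b).trans Setoid.ker_def.symm).trans
      (Setoid.quotientKerEquivRange f)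

namespace ZMod

variable {m : ℕ} [NeZero m]

theorem val_neg_eq_ite (x : ZMod m) : (-x).val = if x.val = 0 then 0 else m - x.val := by
  simp only [neg_val, val_eq_zero]

theorem val_sub_eq_ite (x y : ZMod m) :
    (x - y).val = if y.val ≤ x.val then x.val - y.val else m + x.val - y.val := by
  split_ifs with h
  · exact val_sub h
  · have := x.val_lt
    rw [← neg_sub, val_neg_eq_ite, val_sub (by omega)]
    split_ifs <;> omega

theorem eq_iff_val_eq {x y : ZMod m} : x = y ↔ x.val = y.val := (val_injective m).eq_iff.symm

end ZMod

theorem betw_iff_val {m : ℕ} [NeZero m] (a b x : ZMod m) :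
    Betw a b x ↔ x.val ≠ a.val ∧
      (if a.val ≤ x.val then x.val - a.val else m + x.val - a.val) <
        (if a.val ≤ b.val then b.val - a.val else m + b.val - a.val) := by
  rw [Betw, Ne, ZMod.eq_iff_val_eq, ZMod.val_sub_eq_ite, ZMod.val_sub_eq_ite]

theorem not_betw_self {m : ℕ} (a x : ZMod m) : ¬ Betw a a x := by
  simp [Betw]

theorem betw_swap_iff {m : ℕ} [NeZero m] {a b x : ZMod m} (hab : a ≠ b) (ha : x ≠ a)
    (hb : x ≠ b) : Betw b a x ↔ ¬ Betw a b x := by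
  rw [Ne, ZMod.eq_iff_val_eq] at hab ha hb
  rw [betw_iff_val, betw_iff_val]
  have := a.val_lt; have := b.val_lt; have := x.val_lt
  split_ifs <;> omega

theorem crosses_mk_iff {m : ℕ} [NeZero m] (a b c d : ZMod m) :
    Crosses s(a, b) s(c, d) ↔
      a ≠ c ∧ a ≠ d ∧ b ≠ c ∧ b ≠ d ∧ (Betw a b c ↔ ¬ Betw a b d) := by
  constructor
  · rintro ⟨a', b', c', d', hab, hcd, h⟩
    rcases Sym2.eq_iff.mp hab with ⟨rfl, rfl⟩ | ⟨rfl, rfl⟩ <;>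
      rcases Sym2.eq_iff.mp hcd with ⟨rfl, rfl⟩ | ⟨rfl, rfl⟩
    · exact h
    · obtain ⟨had, hac, hbd, hbc, h⟩ := h
      exact ⟨hac, had, hbc, hbd, by tauto⟩
    -- the first chord is given as `s(b, a)`: pass to the complementary arc from `a` to `b`
    all_goals
      obtain ⟨_, _, _, _, h⟩ := h
      have hab : a ≠ b := by rintro rfl; simp [not_betw_self] at h
      rw [betw_swap_iff hab (Ne.symm ‹a ≠ c›) (Ne.symm ‹b ≠ c›),
        betw_swap_iff hab (Ne.symm ‹a ≠ d›) (Ne.symm ‹b ≠ d›)] at h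
      exact ⟨‹_›, ‹_›, ‹_›, ‹_›, by tauto⟩
  · exact fun h => ⟨a, b, c, d, rfl, rfl, h⟩

theorem isDiagonal_mk_iff {m : ℕ} (a b : ZMod m) :
    IsDiagonal s(a, b) ↔ a ≠ b ∧ a - b ≠ 1 ∧ b - a ≠ 1 := by
  constructor
  · rintro ⟨a', b', h, hne, h₁, h₂⟩
    rcases Sym2.eq_iff.mp h with ⟨rfl, rfl⟩ | ⟨rfl, rfl⟩
    · exact ⟨hne, h₁, h₂⟩
    · exact ⟨hne.symm, h₂, h₁⟩
  · exact fun h => ⟨a, b, rfl, h⟩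

theorem Sym2.map_neg_map_neg {α : Type*} [InvolutiveNeg α] (d : Sym2 α) :
    (d.map fun x => -x).map (fun x => -x) = d := by
  induction d using Sym2.ind
  simp

def foldPair {m : ℕ} (d : Sym2 (ZMod m)) : ℕ × ℕ :=
  Sym2.sortEquiv (d.map fun x => x.valMinAbs.natAbs)

@[simp]
theorem foldPair_mk {m : ℕ} (a b : ZMod m) :
    foldPair s(a, b) =
      (min a.valMinAbs.natAbs b.valMinAbs.natAbs, max a.valMinAbs.natAbs b.valMinAbs.natAbs) :=
  rfl

theorem foldPair_map_neg {m : ℕ} (d : Sym2 (ZMod m)) :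
    foldPair (d.map fun x => -x) = foldPair d := by
  induction d using Sym2.ind
  simp

def FoldedPair (n : ℕ) (p : ℕ × ℕ) : Prop :=
  (p.1 = p.2 ∧ 0 < p.1 ∧ p.1 < n) ∨ (p.1 + 2 ≤ p.2 ∧ p.2 ≤ n)

def unfoldPair (n : ℕ) (p : ℕ × ℕ) : Sym2 (ZMod (2 * n)) :=
  if p.1 = p.2 then s((p.1 : ZMod (2 * n)), -p.1) else s((p.1 : ZMod (2 * n)), p.2)

def IsAxialDiagonal (n : ℕ) (d : Sym2 (ZMod (2 * n))) : Prop :=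
  IsDiagonal d ∧ (d.map (fun x => -x) = d ∨ ¬ Crosses d s((0 : ZMod (2 * n)), (n : ZMod (2 * n))))

theorem natAbs_valMinAbs_natCast {n k : ℕ} (hk : k ≤ n) :
    (k : ZMod (2 * n)).valMinAbs.natAbs = k := by
  rw [ZMod.valMinAbs_natCast_of_le_half (by omega), Int.natAbs_natCast]

theorem foldPair_unfoldPair {n : ℕ} {p : ℕ × ℕ} (hp : FoldedPair n p) :
    foldPair (unfoldPair n p) = p := by
  obtain ⟨i, j⟩ := p
  rcases hp with ⟨rfl : i = j, -, hi⟩ | ⟨hij, hj⟩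
  · simp [unfoldPair, natAbs_valMinAbs_natCast hi.le]
  · simp only [unfoldPair, show i ≠ j by omega, if_false, foldPair_mk,
      natAbs_valMinAbs_natCast hj, natAbs_valMinAbs_natCast (show i ≤ n by omega)]
    rw [min_eq_left (by omega), max_eq_right (by omega)]

section Axial

variable {n : ℕ} [NeZero n]

instance fact_one_lt_two_mul : Fact (1 < 2 * n) := ⟨by have := NeZero.pos n; omega⟩

theorem not_crosses_diameter_iff (a b : ZMod (2 * n)) :
    ¬ Crosses s(a, b) s((0 : ZMod (2 * n)), (n : ZMod (2 * n))) ↔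
      (a.val ≤ n ∧ b.val ≤ n) ∨ ((-a).val ≤ n ∧ (-b).val ≤ n) := by
  have := a.val_lt; have := b.val_lt
  have hn : (n : ZMod (2 * n)).val = n := ZMod.val_natCast_of_lt (by have := NeZero.pos n; omega)
  rw [crosses_mk_iff, betw_iff_val, betw_iff_val]
  simp only [Ne, ZMod.eq_iff_val_eq, ZMod.val_zero, hn, ZMod.val_neg_eq_ite]
  split_ifs <;> omega

theorem natAbs_valMinAbs_of_val_le {x : ZMod (2 * n)} (h : x.val ≤ n) :
    x.valMinAbs.natAbs = x.val := by
  rw [ZMod.valMinAbs_natAbs_eq_min]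
  omega

theorem IsAxialDiagonal.eq_neg_or_val_le {a b : ZMod (2 * n)} (hd : IsAxialDiagonal n s(a, b)) :
    b = -a ∨ (a.val ≤ n ∧ b.val ≤ n) ∨ ((-a).val ≤ n ∧ (-b).val ≤ n) := by
  obtain ⟨-, hfix | hcross⟩ := hd
  · rcases Sym2.eq_iff.mp hfix with ⟨ha, hb⟩ | ⟨hab, -⟩
    · rw [ZMod.neg_eq_self_iff] at ha hb
      have := a.val_lt; have := b.val_lt
      rw [ZMod.eq_iff_val_eq, ZMod.val_zero] at ha hb
      omega
    · exact Or.inl hab.symm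
  · exact Or.inr ((not_crosses_diameter_iff a b).mp hcross)

theorem unfoldPair_foldPair_of_val_le {a b : ZMod (2 * n)} (hab : a ≠ b) (ha : a.val ≤ n)
    (hb : b.val ≤ n) : unfoldPair n (foldPair s(a, b)) = s(a, b) := by
  rw [Ne, ZMod.eq_iff_val_eq] at hab
  rw [foldPair_mk, natAbs_valMinAbs_of_val_le ha, natAbs_valMinAbs_of_val_le hb, unfoldPair,
    if_neg (by omega)]
  rcases le_total a.val b.val with h | h
  · simp [h]
  · simp [h, Sym2.eq_swap]

theorem unfoldPair_foldPair_neg (a : ZMod (2 * n)) :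
    unfoldPair n (foldPair s(a, -a)) = s(a, -a) := by
  rw [foldPair_mk, ZMod.natAbs_valMinAbs_neg, min_self, max_self, unfoldPair, if_pos rfl,
    ZMod.natCast_natAbs_valMinAbs]
  split_ifs
  · rfl
  · rw [neg_neg, Sym2.eq_swap]

theorem foldedPair_foldPair_of_val_le {a b : ZMod (2 * n)} (hd : IsDiagonal s(a, b))
    (ha : a.val ≤ n) (hb : b.val ≤ n) : FoldedPair n (foldPair s(a, b)) := by
  simp only [isDiagonal_mk_iff, Ne, ZMod.eq_iff_val_eq, ZMod.val_sub_eq_ite, ZMod.val_one] at hd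
  rw [foldPair_mk, natAbs_valMinAbs_of_val_le ha, natAbs_valMinAbs_of_val_le hb, FoldedPair]
  split_ifs at hd <;> omega

theorem foldedPair_foldPair_neg {a : ZMod (2 * n)} (ha : a ≠ -a) :
    FoldedPair n (foldPair s(a, -a)) := by
  rw [ne_comm, Ne, ZMod.neg_eq_self_iff, ZMod.eq_iff_val_eq, ZMod.val_zero] at ha
  have := a.val_lt
  rw [foldPair_mk, ZMod.natAbs_valMinAbs_neg, min_self, max_self, FoldedPair,
    ZMod.valMinAbs_natAbs_eq_min]
  omega

theorem IsAxialDiagonal.foldedPair_foldPair {d : Sym2 (ZMod (2 * n))}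
    (hd : IsAxialDiagonal n d) : FoldedPair n (foldPair d) := by
  obtain ⟨a, b, rfl, hdiag⟩ := hd.1
  rcases hd.eq_neg_or_val_le with rfl | ⟨ha, hb⟩ | ⟨ha, hb⟩
  · exact foldedPair_foldPair_neg hdiag.1
  · exact foldedPair_foldPair_of_val_le hd.1 ha hb
  · rw [← foldPair_map_neg]
    refine foldedPair_foldPair_of_val_le ?_ ha hb
    rw [isDiagonal_mk_iff, neg_sub_neg, neg_sub_neg]
    exact ⟨neg_injective.ne hdiag.1, hdiag.2.2, hdiag.2.1⟩

theorem IsAxialDiagonal.unfoldPair_foldPair {d : Sym2 (ZMod (2 * n))}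
    (hd : IsAxialDiagonal n d) :
    unfoldPair n (foldPair d) = d ∨ unfoldPair n (foldPair d) = d.map fun x => -x := by
  obtain ⟨a, b, rfl, hdiag⟩ := hd.1
  rcases hd.eq_neg_or_val_le with rfl | ⟨ha, hb⟩ | ⟨ha, hb⟩
  · exact Or.inl (unfoldPair_foldPair_neg a)
  · exact Or.inl (unfoldPair_foldPair_of_val_le hdiag.1 ha hb)
  · rw [← foldPair_map_neg]
    exact Or.inr (unfoldPair_foldPair_of_val_le (neg_injective.ne hdiag.1) ha hb)

theorem isAxialDiagonal_unfoldPair {p : ℕ × ℕ} (hp : FoldedPair n p) :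
    IsAxialDiagonal n (unfoldPair n p) := by
  obtain ⟨i, j⟩ := p
  rcases hp with ⟨rfl : i = j, hi, hin⟩ | ⟨hij, hj⟩
  · simp only [unfoldPair, if_true]
    refine ⟨?_, Or.inl ?_⟩
    · simp only [isDiagonal_mk_iff, Ne, ZMod.eq_iff_val_eq, ZMod.val_sub_eq_ite,
        ZMod.val_neg_eq_ite, ZMod.val_one, ZMod.val_natCast_of_lt (show i < 2 * n by omega)]
      split_ifs <;> omega
    · rw [Sym2.map_mk, neg_neg, Sym2.eq_swap]
  · have hvi : (i : ZMod (2 * n)).val = i := ZMod.val_natCast_of_lt (by omega)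
    have hvj : (j : ZMod (2 * n)).val = j := ZMod.val_natCast_of_lt (by omega)
    simp only [unfoldPair, show i ≠ j by omega, if_false]
    refine ⟨?_, Or.inr ?_⟩
    · simp only [isDiagonal_mk_iff, Ne, ZMod.eq_iff_val_eq, ZMod.val_sub_eq_ite, ZMod.val_one,
        hvi, hvj]
      split_ifs <;> omega
    · rw [not_crosses_diameter_iff, hvi, hvj]
      omega

theorem foldPair_eq_foldPair_iff {d d' : Sym2 (ZMod (2 * n))} (hd : IsAxialDiagonal n d)
    (hd' : IsAxialDiagonal n d') :
    foldPair d = foldPair d' ↔ d' = d ∨ d' = d.map fun x => -x := by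
  constructor
  · intro h
    rcases hd.unfoldPair_foldPair with hu | hu <;> rcases hd'.unfoldPair_foldPair with hu' | hu' <;>
      rw [← h] at hu' <;> rw [hu] at hu'
    · exact Or.inl hu'.symm
    · exact Or.inr (by rw [hu', Sym2.map_neg_map_neg])
    · exact Or.inr hu'.symm
    · exact Or.inl (by rw [← Sym2.map_neg_map_neg d', ← hu', Sym2.map_neg_map_neg])
  · rintro (rfl | rfl)
    · rfl
    · exact (foldPair_map_neg d).symm

theorem range_foldPair :
    Set.range (fun d : {d // IsAxialDiagonal n d} => foldPair d.1) = {p | FoldedPair n p} := by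
  ext p
  constructor
  · rintro ⟨d, rfl⟩
    exact d.2.foldedPair_foldPair
  · intro hp
    exact ⟨⟨_, isAxialDiagonal_unfoldPair hp⟩, foldPair_unfoldPair hp⟩

end Axial

open Finset in
theorem card_filter_add_two_le (n : ℕ) :
    #((range (n + 1) ×ˢ range (n + 1)).filter fun p => p.1 + 2 ≤ p.2) = n * (n - 1) / 2 := by
  have fiber : ∀ j ∈ range (n + 1), #((range (n + 1)).filter fun i => i + 2 ≤ j) = j - 1 := by
    intro j hj
    rw [mem_range] at hj
    rw [show (range (n + 1)).filter (fun i => i + 2 ≤ j) = range (j - 1) by ext; simp; omega,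
      card_range]
  rw [card_filter, sum_product_right]
  simp_rw [← card_filter]
  rw [sum_congr rfl fiber, sum_range_succ', ← sum_range_id]
  simp

open Finset in
theorem card_setOf_foldedPair (n : ℕ) :
    Nat.card {p | FoldedPair n p} = (n + 2) * (n - 1) / 2 := by
  have hsplit : {p | FoldedPair n p} =
      ↑((Ioo 0 n).image (fun i => (i, i)) ∪
        (range (n + 1) ×ˢ range (n + 1)).filter fun p => p.1 + 2 ≤ p.2) := by
    ext ⟨i, j⟩
    simp only [FoldedPair, Set.mem_ofPred_eq, coe_union, coe_image, coe_filter, Set.mem_union,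
      Set.mem_image, mem_coe, mem_Ioo, Prod.mk.injEq, mem_product, mem_range]
    constructor
    · rintro (⟨rfl, h⟩ | h)
      · exact Or.inl ⟨i, h, rfl, rfl⟩
      · exact Or.inr ⟨⟨by omega, by omega⟩, h.1⟩
    · rintro (⟨k, hk, rfl, rfl⟩ | h)
      · exact Or.inl ⟨rfl, hk⟩
      · omega
  have hdisj : Disjoint ((Ioo 0 n).image fun i => (i, i))
      ((range (n + 1) ×ˢ range (n + 1)).filter fun p => p.1 + 2 ≤ p.2) := by
    rw [disjoint_left]
    simp only [mem_image, mem_filter]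
    rintro _ ⟨k, -, rfl⟩ h
    omega
  rw [hsplit, Nat.card_coe_set_eq, Set.ncard_coe_finset, card_union_of_disjoint hdisj,
    card_image_of_injective _ fun i j h => (Prod.mk.inj h).1, Nat.card_Ioo, Nat.sub_zero,
    card_filter_add_two_le, show (n + 2) * (n - 1) = n * (n - 1) + 2 * (n - 1) by ring,
    Nat.add_mul_div_left _ _ two_pos, add_comm]

/-- In a regular `2n`-gon (`n ≥ 3`) with distinguished longest diagonal
`l = {0, n}` and reflection `x ↦ -x` across `l`, the number of reflection-orbits of
diagonals `d` such that `d` is fixed by the reflection or does not cross `l`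
(equivalently, the number of coarsest nontrivial axially symmetric subdivisions)
is `(n+2)(n-1)/2`. -/
theorem coarsest_axially_symmetric_subdivisions_count (n : ℕ) (hn : 3 ≤ n) :
    let refl : Sym2 (ZMod (2 * n)) → Sym2 (ZMod (2 * n)) := Sym2.map (fun x => -x)
    let l : Sym2 (ZMod (2 * n)) := s((0 : ZMod (2 * n)), (n : ZMod (2 * n)))
    Nat.card (Quot (fun d d' : {d : Sym2 (ZMod (2 * n)) //
        IsDiagonal d ∧ (refl d = d ∨ ¬ Crosses d l)} =>
      d'.1 = d.1 ∨ d'.1 = refl d.1)) = (n + 2) * (n - 1) / 2 := by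
  intro refl l
  have : NeZero n := ⟨by omega⟩
  calc Nat.card _
      = Nat.card (Set.range fun d : {d // IsAxialDiagonal n d} => foldPair d.1) :=
        Nat.card_quot_eq_card_range _ fun d d' => (foldPair_eq_foldPair_iff d.2 d'.2).symm
    _ = Nat.card {p | FoldedPair n p} := by rw [range_foldPair]
    _ = (n + 2) * (n - 1) / 2 := card_setOf_foldedPair n
end

section
/- Let (T, φ) be a phylogenetic tree with n labeled leaves, E its set of non-leaf (internal) edges, and for l ∈ ℝ^E_{≥0} let d_l(i,j) be the sum of l_e over internal edges e on the path from leaf φ(i) to leaf φ(j). Then the linear map ℝ^E → ℝ^{C(n,2)} sending l to (d_l(i,j))_{i<j} is injective. -/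
open scoped Classical

/-- The tree pseudometric on vertices induced by lengths `l` on the edges in `IE`:
`treeDist G IE l u v` is the sum of `l e` over those edges `e ∈ IE` that separate `u`
from `v` in `G` (i.e. lie on the unique path from `u` to `v` when `G` is a tree). -/
noncomputable def treeDist {V : Type*} [Fintype V] (G : SimpleGraph V)
    (IE : Set (Sym2 V)) (l : Sym2 V → ℝ) (u v : V) : ℝ :=
  ∑ e ∈ IE.toFinite.toFinset,
    if ¬ (G.deleteEdges {e}).Reachable u v then l e else 0

/-!
Let `xy` be an internal edge. Since no vertex has degree two, `x` has two neighbours `z₁ ≠ z₂`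
other than `y`, and `y` two neighbours `w₁ ≠ w₂` other than `x`. In a finite forest, a path that
cannot be prolonged ends at a leaf, so there are leaves `a, b, c, d` reached from `x` through
`z₁, z₂` and from `y` through `w₁, w₂`. In a forest the edges separating two vertices are exactly
those of the path joining them, and these four branches meet only at `x` and `y`; hence
`d(a,c) + d(b,d) - d(a,b) - d(c,d) = 2 l(xy)`, so the leaf distances determine `l`.
-/

namespace SimpleGraph

variable {V : Type*} {G : SimpleGraph V}

open Walk

lemma exists_adj_ne_of_degree_ne_one {x y : V} [Fintype (G.neighborSet x)]
    (hx : G.degree x ≠ 1) (hxy : G.Adj x y) : ∃ z, G.Adj x z ∧ z ≠ y := by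
  by_contra! h
  exact hx (degree_eq_one_iff_existsUnique_adj.mpr ⟨y, hxy, h⟩)

lemma exists_two_adj_ne {x y : V} [Fintype (G.neighborSet x)] (hx₁ : G.degree x ≠ 1)
    (hx₂ : G.degree x ≠ 2) (hxy : G.Adj x y) :
    ∃ z₁ z₂, G.Adj x z₁ ∧ G.Adj x z₂ ∧ z₁ ≠ z₂ ∧ z₁ ≠ y ∧ z₂ ≠ y := by
  have hcard : 1 < ((G.neighborFinset x).erase y).card := by
    rw [Finset.card_erase_of_mem (by simpa using hxy), card_neighborFinset_eq_degree]
    have := G.degree_pos_iff_exists_adj x |>.mpr ⟨y, hxy⟩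
    omega
  obtain ⟨z₁, hz₁, z₂, hz₂, hz⟩ := Finset.one_lt_card.mp hcard
  simp only [Finset.mem_erase, mem_neighborFinset] at hz₁ hz₂
  exact ⟨z₁, z₂, hz₁.2, hz₂.2, hz, hz₁.1, hz₂.1⟩

namespace IsAcyclic

lemma snd_eq_of_mem_support (hG : G.IsAcyclic) {u v w a : V} {p : G.Walk u v} {q : G.Walk u w}
    (hp : p.IsPath) (hq : q.IsPath) (hap : a ∈ p.support) (haq : a ∈ q.support) (ha : a ≠ u) :
    p.snd = q.snd := by
  have := (hG.subsingleton_path u a).elim ⟨_, hp.takeUntil hap⟩ ⟨_, hq.takeUntil haq⟩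
  rw [← snd_takeUntil ha p hap, ← snd_takeUntil ha q haq]
  exact congrArg (fun r : G.Path u a => r.1.snd) this

lemma isPath_append (hG : G.IsAcyclic) {u v w : V} {p : G.Walk u v} {q : G.Walk v w}
    (hp : p.IsPath) (hq : q.IsPath) (h : p.penultimate ≠ q.snd) : (p.append q).IsPath := by
  have hq' := hq.support_nodup
  rw [← cons_tail_support q, List.nodup_cons] at hq'
  rw [isPath_def, support_append, List.nodup_append]
  refine ⟨hp.support_nodup, hq'.2, fun a hap _ haq hne => h ?_⟩
  subst hne
  rw [← snd_reverse]
  exact hG.snd_eq_of_mem_support hp.reverse hq (by simpa using hap) (List.mem_of_mem_tail haq)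
    (by rintro rfl; exact hq'.1 haq)

lemma exists_isPath_cons_degree_eq_one [Fintype V] [DecidableRel G.Adj] (hG : G.IsAcyclic)
    {x z : V} (h : G.Adj x z) : ∃ b, ∃ q : G.Walk z b, (cons h q).IsPath ∧ G.degree b = 1 := by
  by_contra! hleaf
  suffices hlong : ∀ n, ∃ b, ∃ q : G.Walk z b, (cons h q).IsPath ∧ n ≤ q.length by
    obtain ⟨b, q, hq, hn⟩ := hlong (Fintype.card V)
    have := hq.length_lt
    simp only [length_cons] at this
    omega
  intro n
  induction n with
  | zero => exact ⟨z, nil, by simp [h.ne], le_rfl⟩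
  | succ n ih =>
    obtain ⟨b, q, hq, hn⟩ := ih
    have hb : G.Adj b (cons h q).penultimate :=
      ((cons h q).adj_penultimate (by simp)).symm
    obtain ⟨c, hbc, hc⟩ := exists_adj_ne_of_degree_ne_one (hleaf b q hq) hb
    have hcq : c ∉ (cons h q).support := fun hc' => hc (hG.eq_penultimate_of_adj_end hq hbc hc')
    refine ⟨c, q.concat hbc, ?_, by simp only [length_concat]; omega⟩
    rw [← concat_cons]
    exact hq.concat hcq hbc

lemma not_reachable_deleteEdges_iff (hG : G.IsAcyclic) {u v : V} {p : G.Walk u v}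
    (hp : p.IsPath) (e : Sym2 V) : ¬ (G.deleteEdges {e}).Reachable u v ↔ e ∈ p.edges := by
  refine ⟨p.mem_edges_of_not_reachable_deleteEdges, fun he hreach => ?_⟩
  induction e using Sym2.ind with
  | h x y =>
  obtain ⟨q, hq⟩ := reachable_deleteEdges_iff_exists_walk.mp hreach
  have : p = q.bypass :=
    congrArg Subtype.val ((hG.subsingleton_path u v).elim ⟨p, hp⟩ ⟨_, q.bypass_isPath⟩)
  exact hq (q.edges_bypass_subset_edges (this ▸ he))

lemma treeDist_eq_sum_edges [Fintype V] (hG : G.IsAcyclic) (IE : Set (Sym2 V)) (L : Sym2 V → ℝ)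
    {u v : V} {p : G.Walk u v} (hp : p.IsPath) :
    treeDist G IE L u v = (p.edges.map (IE.indicator L)).sum := by
  simp only [treeDist, hG.not_reachable_deleteEdges_iff hp]
  rw [← List.sum_toFinset _ hp.edges_nodup]
  simp only [Set.indicator_apply, ← List.mem_toFinset, Finset.sum_ite_mem,
    ← IE.toFinite.mem_toFinset, Finset.inter_comm]

lemma exists_leaves_treeDist_eq [Fintype V] [DecidableRel G.Adj] (hG : G.IsAcyclic)
    (hdeg : ∀ v, G.degree v ≠ 2) {x y : V} (hxy : G.Adj x y) (hx : G.degree x ≠ 1)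
    (hy : G.degree y ≠ 1) :
    ∃ a b c d, G.degree a = 1 ∧ G.degree b = 1 ∧ G.degree c = 1 ∧ G.degree d = 1 ∧
      ∀ (IE : Set (Sym2 V)) (L : Sym2 V → ℝ),
        treeDist G IE L a c + treeDist G IE L b d - treeDist G IE L a b - treeDist G IE L c d =
          2 * IE.indicator L s(x, y) := by
  obtain ⟨z₁, z₂, hz₁, hz₂, hz, hz₁y, hz₂y⟩ := exists_two_adj_ne hx (hdeg x) hxy
  obtain ⟨w₁, w₂, hw₁, hw₂, hw, hw₁x, hw₂x⟩ := exists_two_adj_ne hy (hdeg y) hxy.symm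
  obtain ⟨a, qa, hpa, ha⟩ := hG.exists_isPath_cons_degree_eq_one hz₁
  obtain ⟨b, qb, hpb, hb⟩ := hG.exists_isPath_cons_degree_eq_one hz₂
  obtain ⟨c, qc, hpc, hc⟩ := hG.exists_isPath_cons_degree_eq_one hw₁
  obtain ⟨d, qd, hpd, hd⟩ := hG.exists_isPath_cons_degree_eq_one hw₂
  have hxc : (cons hxy (cons hw₁ qc)).IsPath :=
    hpc.cons fun hx' => hw₁x (by simpa using (hG.eq_snd_of_adj_start hpc hxy.symm hx').symm)
  have hxd : (cons hxy (cons hw₂ qd)).IsPath :=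
    hpd.cons fun hx' => hw₂x (by simpa using (hG.eq_snd_of_adj_start hpd hxy.symm hx').symm)
  have hac := hG.isPath_append hpa.reverse hxc (by rwa [penultimate_reverse, snd_cons, snd_cons])
  have hbd := hG.isPath_append hpb.reverse hxd (by rwa [penultimate_reverse, snd_cons, snd_cons])
  have hab := hG.isPath_append hpa.reverse hpb (by rwa [penultimate_reverse, snd_cons, snd_cons])
  have hcd := hG.isPath_append hpc.reverse hpd (by rwa [penultimate_reverse, snd_cons, snd_cons])
  refine ⟨a, b, c, d, ha, hb, hc, hd, fun IE L => ?_⟩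
  rw [hG.treeDist_eq_sum_edges IE L hac, hG.treeDist_eq_sum_edges IE L hbd,
    hG.treeDist_eq_sum_edges IE L hab, hG.treeDist_eq_sum_edges IE L hcd]
  simp only [edges_append, edges_reverse, edges_cons, List.map_append, List.map_reverse,
    List.map_cons, List.sum_append, List.sum_reverse, List.sum_cons]
  ring

lemma indicator_eq_of_treeDist_leaves_eq [Fintype V] [DecidableRel G.Adj] (hG : G.IsAcyclic)
    (hdeg : ∀ v, G.degree v ≠ 2) {IE : Set (Sym2 V)} {L₁ L₂ : Sym2 V → ℝ}
    (h : ∀ u v : {v : V // G.degree v = 1}, treeDist G IE L₁ u v = treeDist G IE L₂ u v)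
    {e : Sym2 V} (he : e ∈ G.edgeSet) (hint : ∀ v ∈ e, G.degree v ≠ 1) :
    IE.indicator L₁ e = IE.indicator L₂ e := by
  induction e using Sym2.ind with
  | h x y =>
  obtain ⟨a, b, c, d, ha, hb, hc, hd, hdist⟩ :=
    hG.exists_leaves_treeDist_eq hdeg he (hint x (Sym2.mem_mk_left x y))
      (hint y (Sym2.mem_mk_right x y))
  have h₁ := hdist IE L₁
  have h₂ := hdist IE L₂
  rw [h ⟨a, ha⟩ ⟨c, hc⟩, h ⟨b, hb⟩ ⟨d, hd⟩, h ⟨a, ha⟩ ⟨b, hb⟩, h ⟨c, hc⟩ ⟨d, hd⟩, h₂] at h₁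
  linarith

end IsAcyclic

end SimpleGraph

lemma treeDist_self {V : Type*} [Fintype V] (G : SimpleGraph V) (IE : Set (Sym2 V))
    (L : Sym2 V → ℝ) (u : V) : treeDist G IE L u u = 0 := by
  simp [treeDist]

lemma treeDist_comm {V : Type*} [Fintype V] (G : SimpleGraph V) (IE : Set (Sym2 V))
    (L : Sym2 V → ℝ) (u v : V) : treeDist G IE L u v = treeDist G IE L v u := by
  simp only [treeDist, SimpleGraph.reachable_comm]

lemma treeDist_leaves_eq_of_forall_lt {V : Type*} [Fintype V] {G : SimpleGraph V}
    [DecidableRel G.Adj] {IE : Set (Sym2 V)} {L₁ L₂ : Sym2 V → ℝ} {n : ℕ} (φ : Fin n ≃ {v : V // G.degree v = 1})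
    (h : ∀ i j, i < j → treeDist G IE L₁ (φ i) (φ j) = treeDist G IE L₂ (φ i) (φ j))
    (u v : {v : V // G.degree v = 1}) : treeDist G IE L₁ u v = treeDist G IE L₂ u v := by
  obtain ⟨i, rfl⟩ := φ.surjective u
  obtain ⟨j, rfl⟩ := φ.surjective v
  rcases lt_trichotomy i j with hij | rfl | hij
  · exact h i j hij
  · rw [treeDist_self, treeDist_self]
  · rw [treeDist_comm, treeDist_comm G IE L₂]
    exact h j i hij

theorem tree_distance_map_injective_general {V : Type*} [Fintype V] (n : ℕ)
    (G : SimpleGraph V) [DecidableRel G.Adj]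
    (hacyc : G.IsAcyclic) (hdeg : ∀ v, G.degree v ≠ 2)
    (φ : Fin n ≃ {v : V // G.degree v = 1}) :
    Function.Injective
      (fun (l : {e : Sym2 V // e ∈ G.edgeSet ∧ ∀ v ∈ e, G.degree v ≠ 1} → ℝ)
          (p : {p : Fin n × Fin n // p.1 < p.2}) =>
        treeDist G {e : Sym2 V | e ∈ G.edgeSet ∧ ∀ v ∈ e, G.degree v ≠ 1}
          (fun e => if h : e ∈ G.edgeSet ∧ ∀ v ∈ e, G.degree v ≠ 1 then l ⟨e, h⟩ else 0)
          (φ p.1.1) (φ p.1.2)) := by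
  intro l₁ l₂ h
  funext ⟨e, he⟩
  have hleaves := treeDist_leaves_eq_of_forall_lt φ fun i j hij => congrFun h ⟨(i, j), hij⟩
  have hmem : e ∈ {e : Sym2 V | e ∈ G.edgeSet ∧ ∀ v ∈ e, G.degree v ≠ 1} := he
  have := hacyc.indicator_eq_of_treeDist_leaves_eq hdeg hleaves he.1 he.2
  rwa [Set.indicator_of_mem hmem, Set.indicator_of_mem hmem, dif_pos he, dif_pos he] at this

/-- For a phylogenetic tree `(T, φ)` with `n ≥ 3` labeled leaves (a tree with
no degree-2 vertices, leaves bijectively labeled by `Fin n`), the linear map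
`ℝ^E → ℝ^{C(n,2)}` sending a vector `l` of internal-edge lengths to the induced leaf
distances `(d_l(i,j))_{i<j}` is injective. -/
theorem tree_distance_map_injective {V : Type*} [Fintype V] (n : ℕ) (hn : 3 ≤ n)
    (G : SimpleGraph V) [DecidableRel G.Adj]
    (hconn : G.Connected) (hacyc : G.IsAcyclic) (hdeg : ∀ v, G.degree v ≠ 2)
    (φ : Fin n ≃ {v : V // G.degree v = 1}) :
    Function.Injective
      (fun (l : {e : Sym2 V // e ∈ G.edgeSet ∧ ∀ v ∈ e, G.degree v ≠ 1} → ℝ)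
          (p : {p : Fin n × Fin n // p.1 < p.2}) =>
        treeDist G {e : Sym2 V | e ∈ G.edgeSet ∧ ∀ v ∈ e, G.degree v ≠ 1}
          (fun e => if h : e ∈ G.edgeSet ∧ ∀ v ∈ e, G.degree v ≠ 1 then l ⟨e, h⟩ else 0)
          (φ p.1.1) (φ p.1.2)) :=
  tree_distance_map_injective_general n G hacyc hdeg φ
end

section
/- The simplicial complex Δ_as(α) of axially symmetric subdivisions of a labeled regular 2n-gon is isomorphic to the dual associahedron Δ(n+2): there is an order-preserving bijection between axially symmetric subdivisions of the regular 2n-gon (with respect to a fixed diameter l) and all subdivisions of a convex (n+2)-gon by noncrossing diagonals, where the order is refinement. -/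
namespace AxAux

/-- nat model of `(u - v).val` on `ZMod m` -/
def sv (m A B : ℕ) : ℕ := if B ≤ A then A - B else m + A - B

variable {m : ℕ} [NeZero m]

lemma ne_val_iff {a b : ZMod m} : a ≠ b ↔ a.val ≠ b.val :=
  (ZMod.val_injective m).ne_iff.symm

lemma val_sub (u v : ZMod m) : (u - v).val = sv m u.val v.val := by
  rcases eq_or_ne v 0 with rfl | hv
  · simp [sv]
  · have h1 : u - v = u + (-v) := by ring
    have hv0 : v.val ≠ 0 := by simpa [ZMod.val_eq_zero] using hv
    have hu := ZMod.val_lt u; have hvlt := ZMod.val_lt v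
    rw [h1, ZMod.val_add, ZMod.neg_val, if_neg hv]
    unfold sv
    split_ifs with h
    · have e : u.val + (m - v.val) = m + (u.val - v.val) := by omega
      rw [e, Nat.add_mod_left, Nat.mod_eq_of_lt (by omega)]
    · rw [Nat.mod_eq_of_lt (by omega)]; omega

lemma betw_iff (a b x : ZMod m) :
    Betw a b x ↔ x.val ≠ a.val ∧ sv m x.val a.val < sv m b.val a.val := by
  unfold Betw
  rw [val_sub, val_sub, ne_val_iff]

def X (a b c d : ZMod m) : Prop :=
  a ≠ c ∧ a ≠ d ∧ b ≠ c ∧ b ≠ d ∧ (Betw a b c ↔ ¬ Betw a b d)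

lemma betw_self_false (a c : ZMod m) : ¬ Betw a a c := by
  rw [betw_iff]
  rintro ⟨h1, h2⟩
  simp [sv] at h2

lemma X_ne1 {a b c d : ZMod m} (h : X a b c d) : a ≠ b := by
  rintro rfl
  have := h.2.2.2.2
  simp [betw_self_false] at this

lemma betw_rev {a b c : ZMod m} (hab : a ≠ b) (hca : c ≠ a) (hcb : c ≠ b) :
    Betw b a c ↔ ¬ Betw a b c := by
  have h1 := ZMod.val_lt a; have h2 := ZMod.val_lt b; have h3 := ZMod.val_lt c
  rw [ne_val_iff] at hab hca hcb
  rw [betw_iff, betw_iff]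
  unfold sv
  split_ifs <;> omega

lemma X_swapL {a b c d : ZMod m} (h : X a b c d) : X b a c d := by
  obtain ⟨h1, h2, h3, h4, h5⟩ := h
  have hab := X_ne1 ⟨h1, h2, h3, h4, h5⟩
  refine ⟨h3, h4, h1, h2, ?_⟩
  rw [betw_rev hab h1.symm h3.symm, betw_rev hab h2.symm h4.symm]
  tauto

lemma X_swapR {a b c d : ZMod m} (h : X a b c d) : X a b d c := by
  obtain ⟨h1, h2, h3, h4, h5⟩ := h
  exact ⟨h2, h1, h4, h3, by tauto⟩

lemma crosses_iff (x y z w : ZMod m) : Crosses s(x, y) s(z, w) ↔ X x y z w := by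
  constructor
  · rintro ⟨a, b, c, d, hp, hq, h1, h2, h3, h4, h5⟩
    have HX : X a b c d := ⟨h1, h2, h3, h4, h5⟩
    rcases Sym2.eq_iff.mp hp with ⟨rfl, rfl⟩ | ⟨rfl, rfl⟩ <;>
      rcases Sym2.eq_iff.mp hq with ⟨rfl, rfl⟩ | ⟨rfl, rfl⟩
    · exact HX
    · exact X_swapR HX
    · exact X_swapL HX
    · exact X_swapR (X_swapL HX)
  · rintro ⟨h1, h2, h3, h4, h5⟩
    exact ⟨x, y, z, w, rfl, rfl, h1, h2, h3, h4, h5⟩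

lemma crosses_val (x y z w : ZMod m) :
    Crosses s(x, y) s(z, w) ↔
      (x.val ≠ z.val ∧ x.val ≠ w.val ∧ y.val ≠ z.val ∧ y.val ≠ w.val ∧
        ((z.val ≠ x.val ∧ sv m z.val x.val < sv m y.val x.val) ↔
          ¬(w.val ≠ x.val ∧ sv m w.val x.val < sv m y.val x.val))) := by
  rw [crosses_iff]
  unfold X
  simp only [betw_iff, ne_val_iff]

lemma betw_neg {a b c : ZMod m} (hab : a ≠ b) (hca : c ≠ a) (hcb : c ≠ b) :
    Betw (-a) (-b) (-c) ↔ ¬ Betw a b c := by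
  have h1 := ZMod.val_lt a; have h2 := ZMod.val_lt b; have h3 := ZMod.val_lt c
  have hab' : a.val ≠ b.val := ne_val_iff.mp hab
  have hca' : c.val ≠ a.val := ne_val_iff.mp hca
  have hcb' : c.val ≠ b.val := ne_val_iff.mp hcb
  have e1 : -c - -a = a - c := by ring
  have e2 : -b - -a = a - b := by ring
  unfold Betw
  rw [e1, e2, val_sub, val_sub, val_sub, val_sub]
  have hne : (-c ≠ -a) ↔ True := by simp [hca]
  rw [hne]
  have hne2 : (c ≠ a) ↔ True := by simp [hca]
  rw [hne2]
  simp only [true_and]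
  unfold sv
  split_ifs <;> omega

lemma X_neg {a b c d : ZMod m} (h : X a b c d) : X (-a) (-b) (-c) (-d) := by
  obtain ⟨h1, h2, h3, h4, h5⟩ := h
  have hab := X_ne1 ⟨h1, h2, h3, h4, h5⟩
  refine ⟨by simpa using h1, by simpa using h2, by simpa using h3, by simpa using h4, ?_⟩
  rw [betw_neg hab h1.symm h3.symm, betw_neg hab h2.symm h4.symm]
  tauto

lemma crosses_neg {x y z w : ZMod m} :
    Crosses s(-x, -y) s(-z, -w) ↔ Crosses s(x, y) s(z, w) := by
  rw [crosses_iff, crosses_iff]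
  constructor
  · intro h
    have := X_neg h
    simpa [neg_neg] using this
  · exact X_neg

lemma eq_one_iff_val (hm : 1 < m) (u : ZMod m) : u = 1 ↔ u.val = 1 := by
  have h1 : (1 : ZMod m).val = 1 := by
    rw [ZMod.val_one_eq_one_mod]; exact Nat.mod_eq_of_lt hm
  constructor
  · rintro rfl; exact h1
  · intro h; exact ZMod.val_injective m (h.trans h1.symm)

lemma isDiag_iff {x y : ZMod m} :
    IsDiagonal s(x, y) ↔ (x ≠ y ∧ x - y ≠ 1 ∧ y - x ≠ 1) := by
  constructor
  · rintro ⟨a, b, h, h1, h2, h3⟩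
    rcases Sym2.eq_iff.mp h.symm with ⟨rfl, rfl⟩ | ⟨rfl, rfl⟩
    · exact ⟨h1, h2, h3⟩
    · exact ⟨h1.symm, h3, h2⟩
  · rintro ⟨h1, h2, h3⟩; exact ⟨x, y, rfl, h1, h2, h3⟩

lemma isDiag_val (hm : 1 < m) {x y : ZMod m} :
    IsDiagonal s(x, y) ↔
      (x.val ≠ y.val ∧ sv m x.val y.val ≠ 1 ∧ sv m y.val x.val ≠ 1) := by
  rw [isDiag_iff]
  constructor
  · rintro ⟨h1, h2, h3⟩
    refine ⟨ne_val_iff.mp h1, ?_, ?_⟩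
    · rw [← val_sub]; exact fun h => h2 ((eq_one_iff_val hm _).mpr h)
    · rw [← val_sub]; exact fun h => h3 ((eq_one_iff_val hm _).mpr h)
  · rintro ⟨h1, h2, h3⟩
    refine ⟨ne_val_iff.mpr h1, ?_, ?_⟩
    · intro h; exact h2 (by rw [← val_sub]; exact (eq_one_iff_val hm _).mp h)
    · intro h; exact h3 (by rw [← val_sub]; exact (eq_one_iff_val hm _).mp h)

end AxAux

namespace AxMain
open AxAux

set_option linter.unusedSectionVars false
set_option maxHeartbeats 1600000

/-- vertex map from the 2n-gon (half-polygon plus apex) to the (n+2)-gon -/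
def fmap (n : ℕ) (x : ZMod (2 * n)) : ZMod (n + 2) :=
  if x.val ≤ n then ((x.val : ℕ) : ZMod (n + 2)) else ((n + 1 : ℕ) : ZMod (n + 2))

def pim (n : ℕ) : Sym2 (ZMod (2 * n)) → Sym2 (ZMod (n + 2)) := Sym2.map (fmap n)

def Good (n : ℕ) (d : Sym2 (ZMod (2 * n))) : Prop :=
  ∃ x y : ZMod (2 * n), d = s(x, y) ∧ x.val ≤ n ∧ (y.val ≤ n ∨ y = -x)

def rho (n : ℕ) : Sym2 (ZMod (2 * n)) → Sym2 (ZMod (2 * n)) :=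
  Sym2.map (fun x => -x)

variable {n : ℕ}

lemma fval_le (hn : 3 ≤ n) {x : ZMod (2 * n)} (h : x.val ≤ n) :
    (fmap n x).val = x.val := by
  haveI : NeZero (n + 2) := ⟨by omega⟩
  unfold fmap
  rw [if_pos h]
  exact ZMod.val_cast_of_lt (by omega)

lemma fval_gt (hn : 3 ≤ n) {x : ZMod (2 * n)} (h : ¬ x.val ≤ n) :
    (fmap n x).val = n + 1 := by
  haveI : NeZero (n + 2) := ⟨by omega⟩
  unfold fmap
  rw [if_neg h]
  exact ZMod.val_cast_of_lt (by omega)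

lemma negadd (hn : 3 ≤ n) (x : ZMod (2 * n)) :
    ((-x).val + x.val = 0) ∨ ((-x).val + x.val = 2 * n ∧ 1 ≤ x.val ∧ 1 ≤ (-x).val) := by
  haveI : NeZero (2 * n) := ⟨by omega⟩
  rcases eq_or_ne x 0 with rfl | hx
  · left; simp
  · right
    have hv : x.val ≠ 0 := by simpa [ZMod.val_eq_zero] using hx
    have hlt := ZMod.val_lt x
    rw [ZMod.neg_val, if_neg hx]
    omega

lemma good_cases (hn : 3 ≤ n) {d : Sym2 (ZMod (2 * n))} (hg : Good n d) :
    (∃ x y : ZMod (2 * n), d = s(x, y) ∧ x.val ≤ n ∧ y.val ≤ n) ∨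
    (∃ z : ZMod (2 * n), d = s(z, -z) ∧ 1 ≤ z.val ∧ z.val ≤ n - 1) := by
  obtain ⟨x, y, rfl, hx, hy | rfl⟩ := hg
  · exact Or.inl ⟨x, y, rfl, hx, hy⟩
  · by_cases h : (-x).val ≤ n
    · exact Or.inl ⟨x, -x, rfl, hx, h⟩
    · right
      refine ⟨x, rfl, ?_, ?_⟩ <;> · rcases negadd hn x with h' | h' <;> omega

lemma rho_pair (x y : ZMod (2 * n)) : rho n s(x, y) = s(-x, -y) := by
  unfold rho; rw [Sym2.map_pair_eq]

lemma rho_fix_B (z : ZMod (2 * n)) : rho n s(z, -z) = s(z, -z) := by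
  rw [rho_pair, neg_neg]
  exact Sym2.eq_swap

lemma neg_nbar (hn : 3 ≤ n) : -((n : ℕ) : ZMod (2 * n)) = ((n : ℕ) : ZMod (2 * n)) := by
  haveI : NeZero (2 * n) := ⟨by omega⟩
  have h : ((n : ℕ) : ZMod (2 * n)) + ((n : ℕ) : ZMod (2 * n)) = 0 := by
    rw [← Nat.cast_add, show n + n = 2 * n by ring, ZMod.natCast_self]
  exact neg_eq_of_add_eq_zero_left h

lemma rho_l (hn : 3 ≤ n) :
    rho n s((0 : ZMod (2 * n)), ((n : ℕ) : ZMod (2 * n))) = s(0, ((n : ℕ) : ZMod (2 * n))) := by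
  rw [rho_pair, neg_zero, neg_nbar hn]

lemma rho_rho (d : Sym2 (ZMod (2 * n))) : rho n (rho n d) = d := by
  induction d using Sym2.ind with
  | _ x y => simp [rho_pair]

lemma isDiag_rho (hn : 3 ≤ n) {d : Sym2 (ZMod (2 * n))} :
    IsDiagonal (rho n d) ↔ IsDiagonal d := by
  haveI : NeZero (2 * n) := ⟨by omega⟩
  induction d using Sym2.ind with
  | _ x y =>
    rw [rho_pair, isDiag_iff, isDiag_iff]
    simp only [ne_eq, neg_inj, show -x - -y = y - x from by ring,
      show -y - -x = x - y from by ring]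
    tauto

lemma crosses_rho (hn : 3 ≤ n) {p q : Sym2 (ZMod (2 * n))} :
    Crosses (rho n p) (rho n q) ↔ Crosses p q := by
  haveI : NeZero (2 * n) := ⟨by omega⟩
  induction p using Sym2.ind with
  | _ x y =>
    induction q using Sym2.ind with
    | _ z w =>
      rw [rho_pair, rho_pair]
      exact crosses_neg

lemma pim_diag (hn : 3 ≤ n) {d : Sym2 (ZMod (2 * n))} (hd : IsDiagonal d)
    (hg : Good n d) : IsDiagonal (pim n d) := by
  haveI : NeZero (2 * n) := ⟨by omega⟩
  haveI : NeZero (n + 2) := ⟨by omega⟩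
  rcases good_cases hn hg with ⟨x, y, rfl, hx, hy⟩ | ⟨z, rfl, h1, h2⟩
  · rw [isDiag_val (by omega)] at hd
    unfold pim
    rw [Sym2.map_pair_eq, isDiag_val (by omega)]
    rw [fval_le hn hx, fval_le hn hy]
    unfold sv at hd ⊢
    split_ifs at hd ⊢ <;> omega
  · have hz := ZMod.val_lt z
    have hz2 : ¬ (-z).val ≤ n := by rcases negadd hn z with h | h <;> omega
    unfold pim
    rw [Sym2.map_pair_eq, isDiag_val (by omega)]
    rw [fval_le hn (by omega), fval_gt hn hz2]
    unfold sv
    split_ifs <;> omega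

lemma cross_pim (hn : 3 ≤ n) {d d' : Sym2 (ZMod (2 * n))}
    (hg : Good n d) (hg' : Good n d') :
    Crosses (pim n d) (pim n d') ↔ Crosses d d' := by
  haveI : NeZero (2 * n) := ⟨by omega⟩
  haveI : NeZero (n + 2) := ⟨by omega⟩
  rcases good_cases hn hg with ⟨x, y, rfl, hx, hy⟩ | ⟨z, rfl, hz1, hz2⟩ <;>
    rcases good_cases hn hg' with ⟨x', y', rfl, hx', hy'⟩ | ⟨z', rfl, hz1', hz2'⟩
  · unfold pim
    rw [Sym2.map_pair_eq, Sym2.map_pair_eq, crosses_val, crosses_val]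
    rw [fval_le hn hx, fval_le hn hy, fval_le hn hx', fval_le hn hy']
    unfold sv
    split_ifs <;> omega
  · have hzz := ZMod.val_lt z'
    have hz2' : ¬ (-z').val ≤ n := by rcases negadd hn z' with h | h <;> omega
    have hne' := negadd hn z'
    unfold pim
    rw [Sym2.map_pair_eq, Sym2.map_pair_eq, crosses_val, crosses_val]
    rw [fval_le hn hx, fval_le hn hy, fval_le hn (by omega : z'.val ≤ n),
      fval_gt hn hz2']
    unfold sv
    split_ifs <;> omega
  · have hzz := ZMod.val_lt z
    have hz2 : ¬ (-z).val ≤ n := by rcases negadd hn z with h | h <;> omega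
    have hne := negadd hn z
    unfold pim
    rw [Sym2.map_pair_eq, Sym2.map_pair_eq, crosses_val, crosses_val]
    rw [fval_le hn (by omega : z.val ≤ n), fval_gt hn hz2,
      fval_le hn hx', fval_le hn hy']
    unfold sv
    split_ifs <;> omega
  · have hzz := ZMod.val_lt z
    have hzz' := ZMod.val_lt z'
    have hz2 : ¬ (-z).val ≤ n := by rcases negadd hn z with h | h <;> omega
    have hz2' : ¬ (-z').val ≤ n := by rcases negadd hn z' with h | h <;> omega
    have hne := negadd hn z
    have hne' := negadd hn z'
    unfold pim
    rw [Sym2.map_pair_eq, Sym2.map_pair_eq, crosses_val, crosses_val]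
    rw [fval_le hn (by omega : z.val ≤ n), fval_gt hn hz2,
      fval_le hn (by omega : z'.val ≤ n), fval_gt hn hz2']
    unfold sv
    split_ifs <;> omega

set_option maxHeartbeats 1600000 in
lemma nocross_mirror (hn : 3 ≤ n) {x y z w : ZMod (2 * n)}
    (hx : x.val ≤ n) (hy : y.val ≤ n) (hz : z.val ≤ n) (hw : w.val ≤ n) :
    ¬ Crosses s(x, y) s(-z, -w) := by
  haveI : NeZero (2 * n) := ⟨by omega⟩
  have hnz := negadd hn z
  have hnw := negadd hn w
  have h1 := ZMod.val_lt x; have h2 := ZMod.val_lt y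
  rw [crosses_val]
  unfold sv
  split_ifs <;> omega

lemma cross_l (hn : 3 ≤ n) {x y : ZMod (2 * n)}
    (hx1 : 1 ≤ x.val) (hx2 : x.val ≤ n - 1) (hy1 : n + 1 ≤ y.val) :
    Crosses s(x, y) s((0 : ZMod (2 * n)), ((n : ℕ) : ZMod (2 * n))) := by
  haveI : NeZero (2 * n) := ⟨by omega⟩
  have h2 := ZMod.val_lt y
  have h0 : (0 : ZMod (2 * n)).val = 0 := ZMod.val_zero
  have hnv : ((n : ℕ) : ZMod (2 * n)).val = n := ZMod.val_cast_of_lt (by omega)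
  rw [crosses_val]
  rw [h0, hnv]
  unfold sv
  split_ifs <;> omega

end AxMain

namespace AxMain
open AxAux

set_option linter.unusedSectionVars false

variable {n : ℕ}

lemma val_eq_elem {m : ℕ} [NeZero m] {a b : ZMod m} (h : a.val = b.val) : a = b :=
  ZMod.val_injective m h

lemma pim_inj (hn : 3 ≤ n) {d d' : Sym2 (ZMod (2 * n))}
    (hg : Good n d) (hg' : Good n d') (h : pim n d = pim n d') : d = d' := by
  haveI : NeZero (2 * n) := ⟨by omega⟩
  haveI : NeZero (n + 2) := ⟨by omega⟩
  rcases good_cases hn hg with ⟨x, y, rfl, hx, hy⟩ | ⟨z, rfl, hz1, hz2⟩ <;>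
    rcases good_cases hn hg' with ⟨x', y', rfl, hx', hy'⟩ | ⟨z', rfl, hz1', hz2'⟩
  · unfold pim at h
    rw [Sym2.map_pair_eq, Sym2.map_pair_eq] at h
    rcases Sym2.eq_iff.mp h with ⟨e1, e2⟩ | ⟨e1, e2⟩
    · have e1' : x.val = x'.val := by
        have := congrArg ZMod.val e1
        rwa [fval_le hn hx, fval_le hn hx'] at this
      have e2' : y.val = y'.val := by
        have := congrArg ZMod.val e2
        rwa [fval_le hn hy, fval_le hn hy'] at this
      rw [val_eq_elem e1', val_eq_elem e2']
    · have e1' : x.val = y'.val := by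
        have := congrArg ZMod.val e1
        rwa [fval_le hn hx, fval_le hn hy'] at this
      have e2' : y.val = x'.val := by
        have := congrArg ZMod.val e2
        rwa [fval_le hn hy, fval_le hn hx'] at this
      rw [val_eq_elem e1', val_eq_elem e2']
      exact Sym2.eq_swap
  · exfalso
    have hz2'' : ¬ (-z').val ≤ n := by rcases negadd hn z' with h' | h' <;> omega
    unfold pim at h
    rw [Sym2.map_pair_eq, Sym2.map_pair_eq] at h
    rcases Sym2.eq_iff.mp h with ⟨e1, e2⟩ | ⟨e1, e2⟩
    · have := congrArg ZMod.val e2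
      rw [fval_le hn hy, fval_gt hn hz2''] at this
      omega
    · have := congrArg ZMod.val e1
      rw [fval_le hn hx, fval_gt hn hz2''] at this
      omega
  · exfalso
    have hz2'' : ¬ (-z).val ≤ n := by rcases negadd hn z with h' | h' <;> omega
    unfold pim at h
    rw [Sym2.map_pair_eq, Sym2.map_pair_eq] at h
    rcases Sym2.eq_iff.mp h with ⟨e1, e2⟩ | ⟨e1, e2⟩
    · have := congrArg ZMod.val e2
      rw [fval_le hn hy', fval_gt hn hz2''] at this
      omega
    · have := congrArg ZMod.val e2
      rw [fval_le hn hx', fval_gt hn hz2''] at this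
      omega
  · have hz2a : ¬ (-z).val ≤ n := by rcases negadd hn z with h' | h' <;> omega
    have hz2b : ¬ (-z').val ≤ n := by rcases negadd hn z' with h' | h' <;> omega
    unfold pim at h
    rw [Sym2.map_pair_eq, Sym2.map_pair_eq] at h
    rcases Sym2.eq_iff.mp h with ⟨e1, e2⟩ | ⟨e1, e2⟩
    · have := congrArg ZMod.val e1
      rw [fval_le hn (by omega : z.val ≤ n), fval_le hn (by omega : z'.val ≤ n)] at this
      rw [val_eq_elem this]
    · exfalso
      have := congrArg ZMod.val e1
      rw [fval_le hn (by omega : z.val ≤ n), fval_gt hn hz2b] at this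
      omega

lemma preimage_aux (hn : 3 ≤ n) {a b : ZMod (n + 2)} (hab : IsDiagonal s(a, b))
    (ha : a.val ≤ n) : ∃ d, IsDiagonal d ∧ Good n d ∧ pim n d = s(a, b) := by
  haveI : NeZero (2 * n) := ⟨by omega⟩
  haveI : NeZero (n + 2) := ⟨by omega⟩
  have hav := ZMod.val_lt a
  have hbv := ZMod.val_lt b
  rw [isDiag_val (by omega)] at hab
  obtain ⟨h1, h2, h3⟩ := hab
  by_cases hb : b.val ≤ n
  · have hca : (((a.val : ℕ) : ZMod (2 * n))).val = a.val := ZMod.val_cast_of_lt (by omega)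
    have hcb : (((b.val : ℕ) : ZMod (2 * n))).val = b.val := ZMod.val_cast_of_lt (by omega)
    refine ⟨s(((a.val : ℕ) : ZMod (2 * n)), ((b.val : ℕ) : ZMod (2 * n))), ?_, ?_, ?_⟩
    · rw [isDiag_val (by omega), hca, hcb]
      unfold sv at h2 h3 ⊢
      split_ifs at h2 h3 ⊢ <;> omega
    · exact ⟨_, _, rfl, by omega, Or.inl (by omega)⟩
    · unfold pim
      rw [Sym2.map_pair_eq]
      have ea : fmap n ((a.val : ℕ) : ZMod (2 * n)) = a := by
        apply val_eq_elem
        rw [fval_le hn (by omega), hca]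
      have eb : fmap n ((b.val : ℕ) : ZMod (2 * n)) = b := by
        apply val_eq_elem
        rw [fval_le hn (by omega), hcb]
      rw [ea, eb]
  · have hb1 : b.val = n + 1 := by omega
    have ha1 : 1 ≤ a.val ∧ a.val ≤ n - 1 := by
      unfold sv at h2 h3
      split_ifs at h2 h3 <;> omega
    have hzv : (((a.val : ℕ) : ZMod (2 * n))).val = a.val := ZMod.val_cast_of_lt (by omega)
    set z : ZMod (2 * n) := ((a.val : ℕ) : ZMod (2 * n)) with hzdef
    have hnz : ¬ (-z).val ≤ n := by rcases negadd hn z with h' | h' <;> omega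
    refine ⟨s(z, -z), ?_, ⟨z, -z, rfl, by omega, Or.inr rfl⟩, ?_⟩
    · have hne := negadd hn z
      rw [isDiag_val (by omega)]
      unfold sv
      split_ifs <;> omega
    · unfold pim
      rw [Sym2.map_pair_eq]
      have ea : fmap n z = a := by
        apply val_eq_elem
        rw [fval_le hn (by omega), hzv]
      have eb : fmap n (-z) = b := by
        apply val_eq_elem
        rw [fval_gt hn hnz, hb1]
      rw [ea, eb]

lemma preimage_exists (hn : 3 ≤ n) {t : Sym2 (ZMod (n + 2))} (ht : IsDiagonal t) :
    ∃ d, IsDiagonal d ∧ Good n d ∧ pim n d = t := by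
  haveI : NeZero (n + 2) := ⟨by omega⟩
  obtain ⟨a, b, rfl, hne, hd1, hd2⟩ := ht
  by_cases ha : a.val ≤ n
  · exact preimage_aux hn ⟨a, b, rfl, hne, hd1, hd2⟩ ha
  · have hav := ZMod.val_lt a
    have hbv := ZMod.val_lt b
    have hb : b.val ≤ n := by
      by_contra hb
      exact hne (val_eq_elem (by omega))
    obtain ⟨d, hd, hg, he⟩ :=
      preimage_aux hn (⟨b, a, rfl, hne.symm, hd2, hd1⟩ : IsDiagonal s(b, a)) hb
    exact ⟨d, hd, hg, he.trans Sym2.eq_swap⟩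

lemma good_or_mirror_aux (hn : 3 ≤ n) {x y : ZMod (2 * n)}
    (hx : x.val ≤ n) (hy : ¬ y.val ≤ n)
    (hfix : Crosses s(x, y) s((0 : ZMod (2 * n)), ((n : ℕ) : ZMod (2 * n))) →
      rho n s(x, y) = s(x, y)) :
    Good n s(x, y) ∨ Good n (rho n s(x, y)) := by
  haveI : NeZero (2 * n) := ⟨by omega⟩
  have hyv := ZMod.val_lt y
  have hny := negadd hn y
  by_cases h0 : x.val = 0 ∨ x.val = n
  · right
    rw [rho_pair]
    have hnx := negadd hn x
    exact ⟨-x, -y, rfl, by omega, Or.inl (by omega)⟩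
  · have hcross := cross_l hn (x := x) (y := y) (by omega) (by omega) (by omega)
    have hfx := hfix hcross
    rw [rho_pair] at hfx
    rcases Sym2.eq_iff.mp hfx with ⟨e1, e2⟩ | ⟨e1, e2⟩
    · exfalso
      have := congrArg ZMod.val e1
      have hnx := negadd hn x
      omega
    · left
      exact ⟨x, y, rfl, hx, Or.inr e1.symm⟩

lemma good_or_mirror (hn : 3 ≤ n) {d : Sym2 (ZMod (2 * n))} (hd : IsDiagonal d)
    (hfix : Crosses d s((0 : ZMod (2 * n)), ((n : ℕ) : ZMod (2 * n))) → rho n d = d) :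
    Good n d ∨ Good n (rho n d) := by
  haveI : NeZero (2 * n) := ⟨by omega⟩
  obtain ⟨x, y, rfl, hne, h1, h2⟩ := hd
  by_cases hx : x.val ≤ n <;> by_cases hy : y.val ≤ n
  · exact Or.inl ⟨x, y, rfl, hx, Or.inl hy⟩
  · exact good_or_mirror_aux hn hx hy hfix
  · have hswap : s(x, y) = s(y, x) := Sym2.eq_swap
    rw [hswap] at hfix ⊢
    exact good_or_mirror_aux hn hy hx hfix
  · right
    rw [rho_pair]
    have hnx := negadd hn x
    have hny := negadd hn y
    exact ⟨-x, -y, rfl, by omega, Or.inl (by omega)⟩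

lemma fix_of_val_0n (hn : 3 ≤ n) {u : ZMod (2 * n)} (h : u.val = 0 ∨ u.val = n) :
    -u = u := by
  haveI : NeZero (2 * n) := ⟨by omega⟩
  rcases h with h | h
  · have hu : u = 0 := val_eq_elem (by rw [h, ZMod.val_zero])
    rw [hu, neg_zero]
  · have hu : u = ((n : ℕ) : ZMod (2 * n)) :=
      val_eq_elem (by rw [h, ZMod.val_cast_of_lt (by omega)])
    rw [hu, neg_nbar hn]

lemma good_good_fix (hn : 3 ≤ n) {d : Sym2 (ZMod (2 * n))} (hd : IsDiagonal d)
    (hg : Good n d) (hg' : Good n (rho n d)) : rho n d = d := by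
  haveI : NeZero (2 * n) := ⟨by omega⟩
  rcases good_cases hn hg with ⟨x, y, rfl, hx, hy⟩ | ⟨z, rfl, _, _⟩
  · rcases good_cases hn hg' with ⟨u, v, he, hu, hv⟩ | ⟨z, he, _, _⟩
    · rw [rho_pair] at he ⊢
      have hvals : (-x).val ≤ n ∧ (-y).val ≤ n := by
        rcases Sym2.eq_iff.mp he with ⟨e1, e2⟩ | ⟨e1, e2⟩
        · rw [e1, e2]; exact ⟨hu, hv⟩
        · rw [e1, e2]; exact ⟨hv, hu⟩
      have hnx := negadd hn x
      have hny := negadd hn y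
      have ex : -x = x := fix_of_val_0n hn (by omega)
      have ey : -y = y := fix_of_val_0n hn (by omega)
      rw [ex, ey]
    · have hfx : rho n (rho n s(x, y)) = rho n s(x, y) := by
        rw [he]; exact rho_fix_B z
      rw [rho_rho] at hfx
      exact hfx.symm
  · exact rho_fix_B z

def Fm (n : ℕ) (S : Set (Sym2 (ZMod (2 * n)))) : Set (Sym2 (ZMod (n + 2))) :=
  pim n '' {d | d ∈ S ∧ Good n d}

def Gm (n : ℕ) (T : Set (Sym2 (ZMod (n + 2)))) : Set (Sym2 (ZMod (2 * n))) :=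
  {d | IsDiagonal d ∧
    ((Good n d ∧ pim n d ∈ T) ∨ (Good n (rho n d) ∧ pim n (rho n d) ∈ T))}

def SubPred (n : ℕ) (T : Set (Sym2 (ZMod (n + 2)))) : Prop :=
  (∀ d ∈ T, IsDiagonal d) ∧ (∀ d ∈ T, ∀ d' ∈ T, ¬ Crosses d d')

def AxPred (n : ℕ) (S : Set (Sym2 (ZMod (2 * n)))) : Prop :=
  (∀ d ∈ S, IsDiagonal d) ∧ (∀ d ∈ S, ∀ d' ∈ S, ¬ Crosses d d') ∧
  (∀ d ∈ S, rho n d ∈ S) ∧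
  (∀ d ∈ S, Crosses d s((0 : ZMod (2 * n)), ((n : ℕ) : ZMod (2 * n))) → rho n d = d)

lemma Fm_sub (hn : 3 ≤ n) {S : Set (Sym2 (ZMod (2 * n)))} (hS : AxPred n S) :
    SubPred n (Fm n S) := by
  constructor
  · rintro q ⟨d, ⟨hdS, hg⟩, rfl⟩
    exact pim_diag hn (hS.1 d hdS) hg
  · rintro q ⟨d, ⟨hdS, hg⟩, rfl⟩ q' ⟨d', ⟨hd'S, hg'⟩, rfl⟩ hc
    exact hS.2.1 d hdS d' hd'S ((cross_pim hn hg hg').mp hc)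

lemma gm_nocross_aux (hn : 3 ≤ n) {T : Set (Sym2 (ZMod (n + 2)))} (hT : SubPred n T)
    {d1 d2 : Sym2 (ZMod (2 * n))}
    (hg1 : Good n d1) (hm1 : pim n d1 ∈ T)
    (h2 : (Good n d2 ∧ pim n d2 ∈ T) ∨ (Good n (rho n d2) ∧ pim n (rho n d2) ∈ T)) :
    ¬ Crosses d1 d2 := by
  haveI : NeZero (2 * n) := ⟨by omega⟩
  rcases h2 with ⟨hg2, hm2⟩ | ⟨hg2, hm2⟩
  · intro hc
    exact hT.2 _ hm1 _ hm2 ((cross_pim hn hg1 hg2).mpr hc)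
  · rcases good_cases hn hg1 with ⟨x, y, e1, hx, hy⟩ | ⟨z, e1, hz1, hz2⟩
    · rcases good_cases hn hg2 with ⟨u, v, e2, hu, hv⟩ | ⟨w, e2, hw1, hw2⟩
      · have hd2e : d2 = s(-u, -v) := by
          rw [← rho_rho (n := n) d2, e2, rho_pair]
        rw [e1, hd2e]
        exact nocross_mirror hn hx hy hu hv
      · have hfx : rho n (rho n d2) = rho n d2 := by
          rw [e2]; exact rho_fix_B w
        have hd2e : d2 = rho n d2 := (rho_rho (n := n) d2).symm.trans hfx
        intro hc
        apply hT.2 _ hm1 _ hm2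
        apply (cross_pim hn hg1 hg2).mpr
        rwa [← hd2e]
    · have hfx1 : rho n d1 = d1 := by rw [e1]; exact rho_fix_B z
      intro hc
      have hc' : Crosses (rho n d1) (rho n d2) := (crosses_rho hn).mpr hc
      rw [hfx1] at hc'
      exact hT.2 _ hm1 _ hm2 ((cross_pim hn hg1 hg2).mpr hc')

lemma Gm_ax (hn : 3 ≤ n) {T : Set (Sym2 (ZMod (n + 2)))} (hT : SubPred n T) :
    AxPred n (Gm n T) := by
  haveI : NeZero (2 * n) := ⟨by omega⟩
  refine ⟨fun d hd => hd.1, ?_, ?_, ?_⟩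
  · rintro d1 ⟨hdg1, hcase1⟩ d2 ⟨hdg2, hcase2⟩
    rcases hcase1 with ⟨hg1, hm1⟩ | ⟨hg1, hm1⟩
    · exact gm_nocross_aux hn hT hg1 hm1 hcase2
    · intro hc
      have hc' : Crosses (rho n d1) (rho n d2) := (crosses_rho hn).mpr hc
      refine gm_nocross_aux hn hT hg1 hm1 ?_ hc'
      rcases hcase2 with ⟨hg2, hm2⟩ | ⟨hg2, hm2⟩
      · exact Or.inr ⟨by rw [rho_rho]; exact hg2, by rw [rho_rho]; exact hm2⟩
      · exact Or.inl ⟨hg2, hm2⟩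
  · rintro d ⟨hdg, hcase⟩
    refine ⟨(isDiag_rho hn).mpr hdg, ?_⟩
    rcases hcase with ⟨hg, hm⟩ | ⟨hg, hm⟩
    · exact Or.inr ⟨by rw [rho_rho]; exact hg, by rw [rho_rho]; exact hm⟩
    · exact Or.inl ⟨hg, hm⟩
  · rintro d ⟨hdg, hcase⟩ hcl
    have hlm : s((0 : ZMod (2 * n)), ((n : ℕ) : ZMod (2 * n))) =
        s(-(0 : ZMod (2 * n)), -((n : ℕ) : ZMod (2 * n))) := by
      rw [neg_zero, neg_nbar hn]
    have h0v : (0 : ZMod (2 * n)).val ≤ n := by rw [ZMod.val_zero]; omega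
    have hnvv : ((n : ℕ) : ZMod (2 * n)).val ≤ n := by
      rw [ZMod.val_cast_of_lt (by omega)]
    rcases hcase with ⟨hg, _⟩ | ⟨hg, _⟩
    · rcases good_cases hn hg with ⟨x, y, e, hx, hy⟩ | ⟨z, e, _, _⟩
      · exfalso
        rw [e, hlm] at hcl
        exact nocross_mirror hn hx hy h0v hnvv hcl
      · rw [e]; exact rho_fix_B z
    · have hcl' : Crosses (rho n d) s((0 : ZMod (2 * n)), ((n : ℕ) : ZMod (2 * n))) := by
        have h := (crosses_rho hn (p := d)
          (q := s((0 : ZMod (2 * n)), ((n : ℕ) : ZMod (2 * n))))).mpr hcl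
        rwa [rho_l hn] at h
      rcases good_cases hn hg with ⟨x, y, e, hx, hy⟩ | ⟨z, e, _, _⟩
      · exfalso
        rw [e, hlm] at hcl'
        exact nocross_mirror hn hx hy h0v hnvv hcl'
      · have hfx : rho n (rho n d) = rho n d := by
          rw [e]; exact rho_fix_B z
        rw [rho_rho] at hfx
        exact hfx.symm

lemma GF_eq (hn : 3 ≤ n) {S : Set (Sym2 (ZMod (2 * n)))} (hS : AxPred n S) :
    Gm n (Fm n S) = S := by
  ext d
  constructor
  · rintro ⟨hdg, hcase⟩
    rcases hcase with ⟨hg, hm⟩ | ⟨hg, hm⟩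
    · obtain ⟨d', ⟨hd'S, hg'⟩, he⟩ := hm
      have : d' = d := pim_inj hn hg' hg he
      exact this ▸ hd'S
    · obtain ⟨d', ⟨hd'S, hg'⟩, he⟩ := hm
      have h1 : d' = rho n d := pim_inj hn hg' hg he
      have h2 : rho n d ∈ S := h1 ▸ hd'S
      have h3 := hS.2.2.1 _ h2
      rwa [rho_rho] at h3
  · intro hdS
    refine ⟨hS.1 d hdS, ?_⟩
    rcases good_or_mirror hn (hS.1 d hdS) (hS.2.2.2 d hdS) with hg | hg
    · exact Or.inl ⟨hg, ⟨d, ⟨hdS, hg⟩, rfl⟩⟩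
    · exact Or.inr ⟨hg, ⟨rho n d, ⟨hS.2.2.1 d hdS, hg⟩, rfl⟩⟩

lemma FG_eq (hn : 3 ≤ n) {T : Set (Sym2 (ZMod (n + 2)))} (hT : SubPred n T) :
    Fm n (Gm n T) = T := by
  ext t
  constructor
  · rintro ⟨d, ⟨⟨hdg, hcase⟩, hg⟩, rfl⟩
    rcases hcase with ⟨_, hm⟩ | ⟨hg', hm⟩
    · exact hm
    · have hfx := good_good_fix hn hdg hg hg'
      rwa [hfx] at hm
  · intro ht
    obtain ⟨d, hdg, hg, he⟩ := preimage_exists hn (hT.1 t ht)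
    exact ⟨d, ⟨⟨hdg, Or.inl ⟨hg, by rwa [he]⟩⟩, hg⟩, he⟩

lemma Fm_mono {S S' : Set (Sym2 (ZMod (2 * n)))} (h : S ⊆ S') :
    Fm n S ⊆ Fm n S' := by
  rintro q ⟨d, ⟨hdS, hg⟩, rfl⟩
  exact ⟨d, ⟨h hdS, hg⟩, rfl⟩

lemma Gm_mono {T T' : Set (Sym2 (ZMod (n + 2)))} (h : T ⊆ T') :
    Gm n T ⊆ Gm n T' := by
  rintro d ⟨hdg, hcase⟩
  refine ⟨hdg, ?_⟩
  rcases hcase with ⟨hg, hm⟩ | ⟨hg, hm⟩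
  · exact Or.inl ⟨hg, h hm⟩
  · exact Or.inr ⟨hg, h hm⟩

end AxMain

/-- For `n ≥ 3`, fix the regular `2n`-gon with vertices `ℤ/2nℤ`, the longest
diagonal `l = {0, n}`, and the reflection `ρ : x ↦ -x` across `l`.  Axially symmetric
subdivisions (sets of pairwise noncrossing diagonals, closed under `ρ`, containing no
diagonal crossing `l` other than diagonals fixed by `ρ`) are in order-preserving bijection
(for the refinement order, i.e. inclusion of diagonal sets) with all subdivisions of a
convex `(n+2)`-gon by noncrossing diagonals; that is, the complex `Δ_as(α)` is isomorphic
to the dual associahedron `Δ(n+2)`. -/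
theorem axially_symmetric_subdivisions_equiv_associahedron (n : ℕ) (hn : 3 ≤ n) :
    let ρ : Sym2 (ZMod (2 * n)) → Sym2 (ZMod (2 * n)) := Sym2.map (fun x => -x)
    let l : Sym2 (ZMod (2 * n)) := s((0 : ZMod (2 * n)), (n : ZMod (2 * n)))
    let AxSub : Set (Set (Sym2 (ZMod (2 * n)))) :=
      {S | (∀ d ∈ S, IsDiagonal d) ∧ (∀ d ∈ S, ∀ d' ∈ S, ¬ Crosses d d') ∧
        (∀ d ∈ S, ρ d ∈ S) ∧ (∀ d ∈ S, Crosses d l → ρ d = d)}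
    let Sub : Set (Set (Sym2 (ZMod (n + 2)))) :=
      {S | (∀ d ∈ S, IsDiagonal d) ∧ (∀ d ∈ S, ∀ d' ∈ S, ¬ Crosses d d')}
    ∃ e : AxSub ≃ Sub, ∀ A B : AxSub, A.1 ⊆ B.1 ↔ (e A).1 ⊆ (e B).1 := by

  intro ρ l AxSub Sub
  refine ⟨⟨fun S => ⟨AxMain.Fm n S.1, ?_⟩, fun T => ⟨AxMain.Gm n T.1, ?_⟩, ?_, ?_⟩, ?_⟩
  · exact AxMain.Fm_sub hn S.2
  · exact AxMain.Gm_ax hn T.2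
  · intro S
    exact Subtype.ext (AxMain.GF_eq hn S.2)
  · intro T
    exact Subtype.ext (AxMain.FG_eq hn T.2)
  · intro A B
    constructor
    · intro h
      exact AxMain.Fm_mono h
    · intro h
      have h' : AxMain.Fm n A.1 ⊆ AxMain.Fm n B.1 := h
      have h2 := AxMain.Gm_mono h'
      rwa [AxMain.GF_eq hn A.2, AxMain.GF_eq hn B.2] at h2
end

section
/- The complex of phylogenetic trees Θ(n) is a pure flag simplicial complex of dimension n−4, whose faces are in bijection with phylogenetic trees with n labeled leaves, and whose facets correspond to trivalent trees (all internal vertices of degree 3), which have exactly n−3 internal edges. -/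
/-!
Normalizing every split so that the side `A` avoids the leaf `0`, compatibility of splits
becomes laminarity (disjoint or nested) of subsets of `S = [n] \ {0}`, and a face of `Θ(n)` is a
laminar family of clusters `A ⊆ S` with `2 ≤ |A| < |S|`. A maximal such family contains a
two-element cluster `{x, y}` (a cherry), every other member contains both or neither of `x, y`,
and deleting `y` gives a maximal laminar family on `S \ {y}` with one member fewer; by induction
a maximal family has `|S| - 2 = n - 3` members. Flagness holds for any reflexive relation: a
minimal set that is not pairwise related is an unrelated pair.
-/

namespace Finset

variable {α : Type*}

def Laminar (A B : Finset α) : Prop :=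
  Disjoint A B ∨ A ⊆ B ∨ B ⊆ A

theorem Laminar.refl (A : Finset α) : Laminar A A :=
  Or.inr (Or.inl subset_rfl)

theorem Laminar.symm {A B : Finset α} : Laminar A B → Laminar B A
  | .inl h => .inl h.symm
  | .inr (.inl h) => .inr (.inr h)
  | .inr (.inr h) => .inr (.inl h)

variable [DecidableEq α]

theorem Laminar.erase {A B : Finset α} (h : Laminar A B) (y : α) :
    Laminar (A.erase y) (B.erase y) := by
  rcases h with h | h | h
  · exact .inl (h.mono (erase_subset y A) (erase_subset y B))
  · exact .inr (.inl (erase_subset_erase y h))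
  · exact .inr (.inr (erase_subset_erase y h))

theorem Laminar.mem_iff_mem_of_pair {x y : α} {B : Finset α} (h : Laminar {x, y} B)
    (hB : 2 ≤ #B) (hne : B ≠ {x, y}) : x ∈ B ↔ y ∈ B := by
  rcases h with h | h | h
  · rw [disjoint_insert_left, disjoint_singleton_left] at h
    exact iff_of_false h.1 h.2
  · exact iff_of_true (h (by simp)) (h (by simp))
  · exact absurd (eq_of_subset_of_card_le h ((card_le_two).trans hB)) hne

/-- The set `D` with the leaf `y` glued next to `x`: the inverse of deleting `y` from a
set that contains both or neither of `x` and `y`. -/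
def reattach (x y : α) (D : Finset α) : Finset α :=
  if x ∈ D then insert y D else D

variable {x y : α}

theorem mem_reattach {D : Finset α} {a : α} :
    a ∈ reattach x y D ↔ a ∈ D ∨ a = y ∧ x ∈ D := by
  unfold reattach; split_ifs <;> simp [*, or_comm]

theorem reattach_erase (hxy : x ≠ y) {B : Finset α} (h : x ∈ B ↔ y ∈ B) :
    reattach x y (B.erase y) = B := by
  ext a; simp only [mem_reattach, mem_erase]
  by_cases ha : a = y <;> simp_all

theorem erase_reattach {D : Finset α} (hy : y ∉ D) : (reattach x y D).erase y = D := by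
  ext a; simp only [mem_erase, mem_reattach]
  by_cases ha : a = y <;> simp_all

theorem Laminar.reattach {A B : Finset α} (h : Laminar A B) (hA : y ∉ A) (hB : y ∉ B) :
    Laminar (reattach x y A) (reattach x y B) := by
  rcases h with h | h | h
  · refine .inl (disjoint_left.2 fun a haA haB => ?_)
    rw [mem_reattach] at haA haB
    rcases haA with haA | ⟨rfl, hxA⟩ <;> rcases haB with haB | ⟨hay, hxB⟩
    · exact disjoint_left.1 h haA haB
    · exact hA (hay ▸ haA)
    · exact hB haB
    · exact disjoint_left.1 h hxA hxB
  · exact .inr (.inl fun a ha => by rw [mem_reattach] at ha ⊢; tauto)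
  · exact .inr (.inr fun a ha => by rw [mem_reattach] at ha ⊢; tauto)

def IsCluster (S A : Finset α) : Prop :=
  A ⊆ S ∧ 2 ≤ #A ∧ #A < #S

theorem IsCluster.erase {S B : Finset α} (hB : IsCluster S B) (hx : x ∈ S) (hxy : x ≠ y)
    (htwin : x ∈ B ↔ y ∈ B) (hne : B ≠ {x, y}) : IsCluster (S.erase y) (B.erase y) := by
  obtain ⟨hBS, hB2, hBS'⟩ := hB
  refine ⟨erase_subset_erase y hBS, ?_⟩
  by_cases hyB : y ∈ B
  · have hpair : {x, y} ⊂ B :=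
      ssubset_of_subset_of_ne (insert_subset (htwin.2 hyB) (by simpa using hyB)) hne.symm
    have := card_lt_card hpair
    rw [card_pair hxy] at this
    rw [card_erase_of_mem hyB, card_erase_of_mem (hBS hyB)]
    omega
  · have hxB : x ∉ B := fun h => hyB (htwin.1 h)
    have : B ⊆ (S.erase y).erase x :=
      subset_erase.2 ⟨subset_erase.2 ⟨hBS, hyB⟩, hxB⟩
    have := card_le_card this
    rw [card_erase_of_mem (mem_erase.2 ⟨hxy, hx⟩)] at this
    rw [erase_eq_of_notMem hyB]
    omega

theorem IsCluster.reattach {S D : Finset α} (hD : IsCluster (S.erase y) D) (hy : y ∈ S) :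
    IsCluster S (reattach x y D) := by
  obtain ⟨hDS, hD2, hDS'⟩ := hD
  have hsub : D ⊆ Finset.reattach x y D := fun a ha => mem_reattach.2 (.inl ha)
  have hcard : #(Finset.reattach x y D) ≤ #D + 1 := by
    unfold Finset.reattach; split_ifs
    exacts [card_insert_le y D, Nat.le_succ _]
  rw [card_erase_of_mem hy] at hDS'
  refine ⟨fun a ha => ?_, hD2.trans (card_le_card hsub), by omega⟩
  rcases mem_reattach.1 ha with ha | ⟨rfl, -⟩
  exacts [mem_of_mem_erase (hDS ha), hy]

/-- The internal edges of a trivalent tree whose leaves are `S` and one extra root leaf. -/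
structure IsMaxLaminarFamily (S : Finset α) (F : Finset (Finset α)) : Prop where
  isCluster : ∀ A ∈ F, IsCluster S A
  laminar : ∀ A ∈ F, ∀ B ∈ F, Laminar A B
  maximal : ∀ B, IsCluster S B → (∀ A ∈ F, Laminar A B) → B ∈ F

namespace IsMaxLaminarFamily

variable {S : Finset α} {F : Finset (Finset α)}

theorem exists_pair_mem (hF : IsMaxLaminarFamily S F) (hS : 3 ≤ #S) :
    ∃ x y, x ≠ y ∧ {x, y} ∈ F := by
  have hne : F.Nonempty := by
    obtain ⟨T, hTS, hT⟩ := exists_subset_card_eq (s := S) (n := 2) (by omega)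
    rw [nonempty_iff_ne_empty]
    rintro rfl
    simpa using hF.maximal T ⟨hTS, hT.ge, by omega⟩ (by simp)
  obtain ⟨M, hM, hMmin⟩ := exists_min_image F card hne
  obtain ⟨hMS, hM2, hMS'⟩ := hF.isCluster M hM
  obtain ⟨T, hTM, hT2⟩ := exists_subset_card_eq hM2
  -- a smallest member of `F` is only nested above or disjoint from the others
  have hT : T ∈ F := by
    refine hF.maximal T ⟨hTM.trans hMS, hT2.ge, by omega⟩ fun A hA => ?_
    rcases hF.laminar A hA M hM with h | h | h
    · exact .inl (h.mono_right hTM)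
    · rw [eq_of_subset_of_card_le h (hMmin A hA)]
      exact .inr (.inr hTM)
    · exact .inr (.inr (hTM.trans h))
  obtain ⟨x, y, hxy, rfl⟩ := card_eq_two.1 hT2
  exact ⟨x, y, hxy, hT⟩

theorem mem_iff_mem_of_pair_mem (hF : IsMaxLaminarFamily S F) {x y : α} (hpair : {x, y} ∈ F)
    {B : Finset α} (hB : B ∈ F) (hne : B ≠ {x, y}) : x ∈ B ↔ y ∈ B :=
  (hF.laminar _ hpair B hB).mem_iff_mem_of_pair (hF.isCluster B hB).2.1 hne

theorem contract (hF : IsMaxLaminarFamily S F) (hxy : x ≠ y) (hpair : {x, y} ∈ F) :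
    IsMaxLaminarFamily (S.erase y) ((F.erase {x, y}).image (·.erase y)) := by
  have hxS : x ∈ S := (hF.isCluster _ hpair).1 (by simp)
  have hyS : y ∈ S := (hF.isCluster _ hpair).1 (by simp)
  refine ⟨?_, ?_, fun D hD hDlam => ?_⟩
  · simp only [mem_image, mem_erase]
    rintro _ ⟨B, ⟨hne, hB⟩, rfl⟩
    exact (hF.isCluster B hB).erase hxS hxy (hF.mem_iff_mem_of_pair_mem hpair hB hne) hne
  · simp only [mem_image, mem_erase]
    rintro _ ⟨A, ⟨-, hA⟩, rfl⟩ _ ⟨B, ⟨-, hB⟩, rfl⟩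
    exact (hF.laminar A hA B hB).erase y
  have hyD : y ∉ D := fun h => (mem_erase.1 (hD.1 h)).1 rfl
  have hlift : IsCluster S (reattach x y D) := hD.reattach hyS
  have hlam : ∀ B ∈ F, Laminar B (reattach x y D) := by
    intro B hB
    by_cases hne : B = {x, y}
    · subst hne
      by_cases hxD : x ∈ D
      · refine .inr (.inl fun a ha => mem_reattach.2 ?_)
        simp only [mem_insert, mem_singleton] at ha
        rcases ha with rfl | rfl <;> tauto
      · refine .inl (disjoint_left.2 fun a ha ha' => ?_)
        simp only [mem_insert, mem_singleton, mem_reattach] at ha ha'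
        rcases ha with rfl | rfl <;> tauto
    · rw [← reattach_erase hxy (hF.mem_iff_mem_of_pair_mem hpair hB hne)]
      exact (hDlam _ (mem_image_of_mem _ (mem_erase.2 ⟨hne, hB⟩))).reattach
        (notMem_erase y B) hyD
  have hmem := hF.maximal _ hlift hlam
  have hne : reattach x y D ≠ {x, y} := by
    intro h
    have : D = {x} := by
      rw [← erase_reattach (x := x) hyD, h, erase_insert_of_ne hxy, erase_singleton,
        insert_empty]
    simpa [this] using hD.2.1
  exact mem_image.2 ⟨_, mem_erase.2 ⟨hne, hmem⟩, erase_reattach hyD⟩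

theorem card_add_two (hF : IsMaxLaminarFamily S F) (hS : 2 ≤ #S) : #F + 2 = #S := by
  obtain ⟨m, hm⟩ : ∃ m, #S = m := ⟨_, rfl⟩
  induction m generalizing S F with
  | zero => omega
  | succ m ih =>
    obtain hS2 | hS3 := hS.eq_or_lt
    · have : F = ∅ := eq_empty_of_forall_notMem fun A hA => by
        have := hF.isCluster A hA
        unfold IsCluster at this
        omega
      simp [this, hS2]
    obtain ⟨x, y, hxy, hpair⟩ := hF.exists_pair_mem hS3
    have hyS : y ∈ S := (hF.isCluster _ hpair).1 (by simp)
    have hinj : Set.InjOn (·.erase y) (F.erase {x, y} : Set (Finset α)) := by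
      intro A hA B hB hAB
      simp only [coe_erase, Set.mem_sdiff, mem_coe, Set.mem_singleton_iff] at hA hB
      rw [← reattach_erase hxy (hF.mem_iff_mem_of_pair_mem hpair hA.1 hA.2),
        ← reattach_erase hxy (hF.mem_iff_mem_of_pair_mem hpair hB.1 hB.2)]
      exact congrArg (reattach x y) hAB
    have hcard := ih (hF.contract hxy hpair) (by rw [card_erase_of_mem hyS]; omega)
      (by rw [card_erase_of_mem hyS]; omega)
    rw [card_image_of_injOn hinj, card_erase_of_mem hpair, card_erase_of_mem hyS] at hcard
    have := card_pos.2 ⟨_, hpair⟩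
    omega

end IsMaxLaminarFamily

theorem splits_compatible_iff_laminar [Fintype α] {A B : Finset α} {z : α} (hA : z ∉ A)
    (hB : z ∉ B) :
    (A ∩ B = ∅ ∨ A ∩ Bᶜ = ∅ ∨ Aᶜ ∩ B = ∅ ∨ Aᶜ ∩ Bᶜ = ∅) ↔ Laminar A B := by
  have hAB : ¬ Disjoint Aᶜ Bᶜ := not_disjoint_iff.2 ⟨z, by simpa, by simpa⟩
  simp only [← disjoint_iff_inter_eq_empty, disjoint_compl_right_iff, disjoint_compl_left_iff,
    hAB, or_false, Laminar]

theorem card_eq_two_of_minimal_not_pairwise {ι : Type*} [DecidableEq ι] {r : ι → ι → Prop}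
    (hr : ∀ a, r a a) {F : Finset ι} (hF : ¬ ∀ a ∈ F, ∀ b ∈ F, r a b)
    (hmin : ∀ F' ⊂ F, ∀ a ∈ F', ∀ b ∈ F', r a b) : #F = 2 := by
  simp only [not_forall] at hF
  obtain ⟨a, ha, b, hb, hab⟩ := hF
  have hpair : {a, b} = F := by
    by_contra hne
    exact hab (hmin _ (ssubset_of_subset_of_ne (insert_subset ha (by simpa)) hne) a (by simp)
      b (by simp))
  rw [← hpair, card_pair fun h : a = b => hab (h ▸ hr a)]

theorem isMaxLaminarFamily_map_subtype {S : Finset α} {P : Finset α → Prop}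
    (hP : ∀ A, P A ↔ IsCluster S A) {r : Subtype P → Subtype P → Prop}
    (hr : ∀ A B, r A B ↔ Laminar A.1 B.1) {F : Finset (Subtype P)}
    (hface : ∀ A ∈ F, ∀ B ∈ F, r A B)
    (hmax : ∀ F', F ⊆ F' → (∀ A ∈ F', ∀ B ∈ F', r A B) → F' = F) :
    IsMaxLaminarFamily S (F.map (Function.Embedding.subtype P)) := by
  simp only [hr] at hface hmax
  refine ⟨by simpa [hP] using fun A hA _ => hA, by simpa using hface, fun B hB hBlam => ?_⟩
  simp only [mem_map, Function.Embedding.coe_subtype] at hBlam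
  let v : Subtype P := ⟨B, (hP B).2 hB⟩
  have hface' : ∀ A ∈ insert v F, ∀ C ∈ insert v F, Laminar A.1 C.1 := by
    simp only [mem_insert, forall_eq_or_imp]
    exact ⟨⟨.refl _, fun C hC => (hBlam _ ⟨C, hC, rfl⟩).symm⟩,
      fun A hA => ⟨hBlam _ ⟨A, hA, rfl⟩, hface A hA⟩⟩
  exact mem_map_of_mem _ (hmax _ (subset_insert v F) hface' ▸ mem_insert_self v F)

end Finset

/-- The complex of phylogenetic trees `Θ(n)` (`n ≥ 4`) is a pure flag
simplicial complex of dimension `n − 4`.  Its vertices are the splits `{A, Aᶜ}` of `[n]`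
with `|A|, |Aᶜ| ≥ 2` (normalized so that `0 ∉ A`), and its faces are the pairwise
compatible sets of splits, where splits `{A,B}`, `{A',B'}` are compatible iff one of
`A∩A'`, `A∩B'`, `B∩A'`, `B∩B'` is empty.  We state: every maximal face has exactly
`n − 3` vertices (purity of dimension `n − 4`, so facets correspond to trivalent trees
with `n − 3` internal edges), and every minimal non-face has exactly `2` vertices
(flagness). -/
theorem phylo_complex_pure_and_flag (n : ℕ) (hn : 4 ≤ n) :
    let Vtx := {A : Finset (Fin n) // 2 ≤ A.card ∧ A.card ≤ n - 2 ∧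
      (⟨0, by omega⟩ : Fin n) ∉ A}
    let compat : Vtx → Vtx → Prop := fun A B =>
      A.1 ∩ B.1 = ∅ ∨ A.1 ∩ B.1ᶜ = ∅ ∨ A.1ᶜ ∩ B.1 = ∅ ∨ A.1ᶜ ∩ B.1ᶜ = ∅
    (∀ F : Finset Vtx, (∀ A ∈ F, ∀ B ∈ F, compat A B) →
      (∀ F' : Finset Vtx, F ⊆ F' → (∀ A ∈ F', ∀ B ∈ F', compat A B) → F' = F) →
      F.card = n - 3) ∧
    (∀ F : Finset Vtx, ¬ (∀ A ∈ F, ∀ B ∈ F, compat A B) →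
      (∀ F' : Finset Vtx, F' ⊂ F → (∀ A ∈ F', ∀ B ∈ F', compat A B)) →
      F.card = 2) := by
  intro Vtx compat
  have hcompat (A B : Vtx) : compat A B ↔ Finset.Laminar A.1 B.1 :=
    Finset.splits_compatible_iff_laminar A.2.2.2 B.2.2.2
  let S : Finset (Fin n) := Finset.univ.erase ⟨0, by omega⟩
  have hS : S.card = n - 1 := by simp [S]
  have hcluster (A : Finset (Fin n)) :
      (2 ≤ A.card ∧ A.card ≤ n - 2 ∧ (⟨0, by omega⟩ : Fin n) ∉ A) ↔ Finset.IsCluster S A := by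
    have : A.card ≤ n - 2 ↔ A.card < n - 1 := by omega
    simp only [Finset.IsCluster, hS, S, Finset.subset_erase, Finset.subset_univ, true_and]
    tauto
  refine ⟨fun F hface hmax => ?_, fun F => Finset.card_eq_two_of_minimal_not_pairwise
    fun A => (hcompat A A).2 (.refl _)⟩
  have := (Finset.isMaxLaminarFamily_map_subtype hcluster hcompat hface hmax).card_add_two
    (by omega)
  rw [Finset.card_map, hS] at this
  omega
end
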